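/- arXiv:2602.15299 — 7 statements merged into one kernel-verified Lean document; each statement's English description precedes it below -/
import Mathlib

section
/- Let (k_n)_{n≥0} be the increasing enumeration of the integer Cantor set C_{b,D} with digit set D of size δ = |D| (containing 0). Then for all i ≥ 0, n ≥ 0, and 0 ≤ j < δ^i, one has k_{δ^i n + j} = b^i k_n + k_j. -/
open MeasureTheory Filter Finset

/-- The integer Cantor set with base `b` and digit set `D`. -/
def intCantorSet (b : ℕ) (D : Finset ℕ) : Set ℕ :=
  {m | ∀ d ∈ Nat.digits b m, d ∈ D}

/-!
Write `C = C_{b,D}`, `δ = |D|` and `count m = #(C ∩ [0, m))`; then `k = Nat.nth (· ∈ C)`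
and `count (k n) = n`. Since `0 ∈ D`, padding with zero digits is harmless: for `y < b ^ i`,
`b ^ i * x + y ∈ C ↔ x ∈ C ∧ y ∈ C`. Counting with this splitting gives
`count (b ^ i * a + c) = δ ^ i * count a + count c` for `a ∈ C` and `c ≤ b ^ i`, in particular
`count (b ^ i) = δ ^ i`. Hence for `j < δ ^ i` the element `b ^ i * k n + k j` of `C` has count
`δ ^ i * n + j`, i.e. it is `k (δ ^ i * n + j)`.
-/

open Nat

theorem Nat.eq_nth_of_strictMono {p : ℕ → Prop} {f : ℕ → ℕ} (hf : StrictMono f)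
    (hrange : Set.range f = Set.ofPred p) : f = nth p := by
  have hinf : (Set.ofPred p).Infinite := hrange ▸ Set.infinite_range_of_injective hf.injective
  exact (hf.range_inj (nth_strictMono hinf)).1 (hrange.trans (range_nth_of_infinite hinf).symm)

namespace intCantorSet

variable {b : ℕ} {D : Finset ℕ}

theorem zero_mem : 0 ∈ intCantorSet b D := by
  simp [intCantorSet]

theorem mem_iff_of_lt (h0 : 0 ∈ D) {d : ℕ} (hd : d < b) : d ∈ intCantorSet b D ↔ d ∈ D := by
  rcases eq_or_ne d 0 with rfl | hd0
  · simp [zero_mem, h0]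
  · simp [intCantorSet, digits_of_lt b d hd0 hd]

theorem pow_mul_add_mem_iff (hb : 1 < b) (h0 : 0 ∈ D) {i x y : ℕ} (hy : y < b ^ i) :
    b ^ i * x + y ∈ intCantorSet b D ↔ x ∈ intCantorSet b D ∧ y ∈ intCantorSet b D := by
  rcases Nat.eq_zero_or_pos x with rfl | hx
  · simp [zero_mem]
  obtain ⟨z, rfl⟩ := Nat.exists_eq_add_of_le ((digits_length_le_iff hb y).2 hy)
  rw [add_comm, intCantorSet, Set.mem_ofPred_eq, ← digits_append_zeroes_append_digits hb hx]
  simp only [List.mem_append, List.mem_replicate, or_imp, forall_and]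
  simp [h0, and_comm]

variable [DecidablePred (· ∈ intCantorSet b D)]

theorem count_pow_mul_add (hb : 1 < b) (h0 : 0 ∈ D) (i a : ℕ) {c : ℕ} (hc : c ≤ b ^ i) :
    count (· ∈ intCantorSet b D) (b ^ i * a + c) =
      count (· ∈ intCantorSet b D) (b ^ i * a) +
        if a ∈ intCantorSet b D then count (· ∈ intCantorSet b D) c else 0 := by
  rw [count_add]
  congr 1
  have hshift : ∀ m ∈ range c, b ^ i * a + m ∈ intCantorSet b D ↔
      a ∈ intCantorSet b D ∧ m ∈ intCantorSet b D := fun m hm =>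
    pow_mul_add_mem_iff hb h0 ((mem_range.1 hm).trans_le hc)
  rw [count_eq_card_filter_range, filter_congr hshift]
  split_ifs with ha
  · simp [ha, count_eq_card_filter_range]
  · simp [ha]

theorem count_pow_mul (hb : 1 < b) (h0 : 0 ∈ D) (i a : ℕ) :
    count (· ∈ intCantorSet b D) (b ^ i * a) =
      count (· ∈ intCantorSet b D) (b ^ i) * count (· ∈ intCantorSet b D) a := by
  induction a with
  | zero => simp
  | succ a ih =>
    rw [mul_add_one, count_pow_mul_add hb h0 i a le_rfl, ih, count_succ]
    split_ifs <;> ring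

theorem count_base (h0 : 0 ∈ D) (hDb : ∀ d ∈ D, d < b) :
    count (· ∈ intCantorSet b D) b = D.card := by
  rw [count_eq_card_filter_range, filter_congr fun d hd => mem_iff_of_lt h0 (mem_range.1 hd),
    filter_mem_eq_inter, inter_eq_right.2 fun d hd => mem_range.2 (hDb d hd)]

theorem count_base_pow (hb : 1 < b) (h0 : 0 ∈ D) (hDb : ∀ d ∈ D, d < b) (i : ℕ) :
    count (· ∈ intCantorSet b D) (b ^ i) = D.card ^ i := by
  induction i with
  | zero => simp [count_one, zero_mem]
  | succ i ih => rw [pow_succ, count_pow_mul hb h0, ih, count_base h0 hDb, pow_succ]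

end intCantorSet

theorem stmt1_general (b : ℕ) (D : Finset ℕ) (hb : 3 ≤ b) (hDb : ∀ d ∈ D, d < b)
    (h0 : 0 ∈ D)
    (k : ℕ → ℕ) (hmono : StrictMono k) (hrange : Set.range k = intCantorSet b D) :
    ∀ (i n j : ℕ), j < D.card ^ i →
      k (D.card ^ i * n + j) = b ^ i * k n + k j := by
  classical
  intro i n j hj
  have hb1 : 1 < b := by omega
  have hinf : (Set.ofPred (· ∈ intCantorSet b D)).Infinite :=
    hrange ▸ Set.infinite_range_of_injective hmono.injective
  obtain rfl : k = nth (· ∈ intCantorSet b D) := Nat.eq_nth_of_strictMono hmono hrange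
  rw [← intCantorSet.count_base_pow hb1 h0 hDb] at hj ⊢
  have hkj : nth (· ∈ intCantorSet b D) j < b ^ i := nth_lt_of_lt_count hj
  have hkn_mem := nth_mem_of_infinite hinf n
  have hmem := (intCantorSet.pow_mul_add_mem_iff hb1 h0 hkj).2 ⟨hkn_mem, nth_mem_of_infinite hinf j⟩
  rw [← nth_count hmem, intCantorSet.count_pow_mul_add hb1 h0 i _ hkj.le, if_pos hkn_mem,
    intCantorSet.count_pow_mul hb1 h0, count_nth_of_infinite hinf, count_nth_of_infinite hinf]

/-- For all `i ≥ 0`, `n ≥ 0`, and `0 ≤ j < |D|^i`,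
`k_{|D|^i n + j} = b^i k_n + k_j`. -/
theorem stmt1 (b : ℕ) (D : Finset ℕ) (hb : 3 ≤ b) (hDb : ∀ d ∈ D, d < b)
    (hc2 : 2 ≤ D.card) (hcb : D.card < b) (h0 : 0 ∈ D)
    (k : ℕ → ℕ) (hmono : StrictMono k) (hrange : Set.range k = intCantorSet b D) :
    ∀ (i n j : ℕ), j < D.card ^ i →
      k (D.card ^ i * n + j) = b ^ i * k n + k j :=
  stmt1_general b D hb hDb h0 k hmono hrange
end

section
/- Let (k_n)_{n≥0} enumerate the integer Cantor set C_{b,D} in increasing order, and let s_b(m) denote the sum of base-b digits of m. Then for all i ≥ 0, n ≥ 0, and 0 ≤ j < |D|^i, one has s_b(k_{|D|^i n + j}) = s_b(k_n) + s_b(k_j). -/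
open MeasureTheory Filter Finset

/-!
Let `e t` be the `t`-th smallest element of `D`. Writing `n` in base `|D|`, replacing each digit `t`
by `e t` and reading the result in base `b` is strictly increasing (as `e` is, with values below
`b`) and its image is exactly `C_{b,D}`; hence it is the enumeration `k`. So `s_b(k_n)` is the sum
of `e` over the base-`|D|` digits of `n`. Since `e 0 = 0`, this sum is additive under
concatenation of digit strings padded with zeros, and for `j < |D|^i` the base-`|D|` digits of
`|D|^i n + j` are those of `j`, padded to length `i`, followed by those of `n`.
-/

theorem Nat.sum_map_digits_pow_mul_add {M : Type*} [AddCommMonoid M] {c i n j : ℕ} {f : ℕ → M}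
    (hc : 1 < c) (hf : f 0 = 0) (hj : j < c ^ i) :
    ((Nat.digits c (c ^ i * n + j)).map f).sum
      = ((Nat.digits c n).map f).sum + ((Nat.digits c j).map f).sum := by
  rcases Nat.eq_zero_or_pos n with rfl | hn
  · simp
  obtain ⟨k, rfl⟩ := Nat.exists_eq_add_of_le ((Nat.digits_length_le_iff hc j).mpr hj)
  rw [add_comm, ← Nat.digits_append_zeroes_append_digits hc hn]
  simp [hf, add_comm]

theorem strictMono_of_eq_add_mul_div {b c : ℕ} {e g : ℕ → ℕ} (hc : 1 < c)
    (he : StrictMonoOn e (Set.Iio c)) (heb : ∀ t < c, e t < b)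
    (hg : ∀ n, g n = e (n % c) + b * g (n / c)) : StrictMono g := by
  intro m n hmn
  induction n using Nat.strong_induction_on generalizing m with
  | _ n ih =>
    have hmc : m % c < c := Nat.mod_lt _ (by omega)
    have hnc : n % c < c := Nat.mod_lt _ (by omega)
    rcases (Nat.div_le_div_right (c := c) hmn.le).lt_or_eq with hdiv | hdiv
    · have hlt : g (m / c) < g (n / c) := ih _ (Nat.div_lt_self (by omega) hc) hdiv
      calc g m = e (m % c) + b * g (m / c) := hg m
        _ < b * (g (m / c) + 1) := by rw [mul_add_one, add_comm]; gcongr; exact heb _ hmc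
        _ ≤ b * g (n / c) := by gcongr; exact hlt
        _ ≤ g n := by rw [hg n]; exact Nat.le_add_left _ _
    · have hmod : m % c < n % c := by
        rw [← Nat.div_add_mod m c, ← Nat.div_add_mod n c, hdiv] at hmn
        omega
      rw [hg m, hg n, hdiv]
      gcongr
      exact he hmc hnc hmod

def cantorEnum (b c : ℕ) (e : ℕ → ℕ) (n : ℕ) : ℕ :=
  Nat.ofDigits b ((Nat.digits c n).map e)

section cantorEnum

variable {b c : ℕ} {e : ℕ → ℕ}

theorem cantorEnum_eq_add_mul (hc : 1 < c) (he0 : e 0 = 0) (n : ℕ) :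
    cantorEnum b c e n = e (n % c) + b * cantorEnum b c e (n / c) := by
  rcases eq_or_ne n 0 with rfl | hn
  · simp [cantorEnum, he0]
  · rw [cantorEnum, Nat.digits_eq_cons_digits_div hc hn, List.map_cons, Nat.ofDigits_cons,
      cantorEnum]

theorem strictMono_cantorEnum (hc : 1 < c) (he0 : e 0 = 0) (he : StrictMonoOn e (Set.Iio c))
    (heb : ∀ t < c, e t < b) : StrictMono (cantorEnum b c e) :=
  strictMono_of_eq_add_mul_div hc he heb (cantorEnum_eq_add_mul hc he0)

theorem digits_cantorEnum (hb : 1 < b) (hc : 1 < c) (he0 : e 0 = 0)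
    (he : StrictMonoOn e (Set.Iio c)) (heb : ∀ t < c, e t < b) (n : ℕ) :
    Nat.digits b (cantorEnum b c e n) = (Nat.digits c n).map e := by
  refine Nat.digits_ofDigits b hb _ ?_ fun hne => ?_
  · simp only [List.mem_map]
    rintro _ ⟨t, ht, rfl⟩
    exact heb t (Nat.digits_lt_base hc ht)
  · have hn : n ≠ 0 := by rintro rfl; simp at hne
    have hlast := Nat.getLast_digit_ne_zero c hn
    have hlast_lt :=
      Nat.digits_lt_base hc (List.getLast_mem (Nat.digits_ne_nil_iff_ne_zero.mpr hn))
    rw [List.getLast_map, ← he0]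
    exact (he (Set.mem_Iio.mpr (by omega)) hlast_lt (Nat.pos_of_ne_zero hlast)).ne'

theorem range_cantorEnum (hb : 1 < b) (hc : 1 < c) (he0 : e 0 = 0)
    (he : StrictMonoOn e (Set.Iio c)) (heb : ∀ t < c, e t < b) {D : Finset ℕ}
    (hD : e '' Set.Iio c = D) : Set.range (cantorEnum b c e) = intCantorSet b D := by
  ext m
  constructor
  · rintro ⟨n, rfl⟩ d hd
    rw [digits_cantorEnum hb hc he0 he heb] at hd
    obtain ⟨t, ht, rfl⟩ := List.mem_map.mp hd
    rw [← Finset.mem_coe, ← hD]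
    exact Set.mem_image_of_mem e (Nat.digits_lt_base hc ht)
  · intro hm
    have hpre : ∀ d ∈ Nat.digits b m, ∃ t ∈ Set.Iio c, e t = d := fun d hd => by
      rw [← Set.mem_image, hD]; exact hm d hd
    set L := (Nat.digits b m).map (Function.invFunOn e (Set.Iio c))
    have hL : L.map e = Nat.digits b m := by
      rw [List.map_map]
      exact (List.map_congr_left fun d hd => Function.invFunOn_eq (hpre d hd)).trans
        (List.map_id' _)
    have hdigits : Nat.digits c (Nat.ofDigits c L) = L := by
      refine Nat.digits_ofDigits c hc L ?_ fun hne => ?_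
      · simp only [L, List.mem_map]
        rintro _ ⟨d, hd, rfl⟩
        exact Function.invFunOn_mem (hpre d hd)
      · intro h0
        have hm0 : Nat.digits b m ≠ [] := by rintro h; simp [L, h] at hne
        apply Nat.getLast_digit_ne_zero b (Nat.digits_ne_nil_iff_ne_zero.mp hm0)
        simp_rw [← hL]
        rw [List.getLast_map, h0, he0]
    exact ⟨Nat.ofDigits c L, by rw [cantorEnum, hdigits, hL, Nat.ofDigits_digits]⟩

theorem sum_digits_cantorEnum_pow_mul_add (hb : 1 < b) (hc : 1 < c) (he0 : e 0 = 0)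
    (he : StrictMonoOn e (Set.Iio c)) (heb : ∀ t < c, e t < b) {i n j : ℕ} (hj : j < c ^ i) :
    (Nat.digits b (cantorEnum b c e (c ^ i * n + j))).sum
      = (Nat.digits b (cantorEnum b c e n)).sum + (Nat.digits b (cantorEnum b c e j)).sum := by
  simp only [digits_cantorEnum hb hc he0 he heb]
  exact Nat.sum_map_digits_pow_mul_add hc he0 hj

end cantorEnum

theorem Finset.strictMonoOn_nth (D : Finset ℕ) :
    StrictMonoOn (Nat.nth (· ∈ D)) (Set.Iio #D) := by
  convert Nat.nth_strictMonoOn (p := (· ∈ D)) D.finite_toSet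
  exact D.finite_toSet_toFinset.symm

theorem Finset.image_nth_Iio_card (D : Finset ℕ) : Nat.nth (· ∈ D) '' Set.Iio #D = D := by
  convert Nat.image_nth_Iio_card (p := (· ∈ D)) D.finite_toSet
  · exact D.finite_toSet_toFinset.symm
  · rfl

theorem stmt2_general (b : ℕ) (D : Finset ℕ) (hb : 3 ≤ b) (hDb : ∀ d ∈ D, d < b)
    (hc2 : 2 ≤ D.card) (h0 : 0 ∈ D)
    (k : ℕ → ℕ) (hmono : StrictMono k) (hrange : Set.range k = intCantorSet b D) :
    ∀ (i n j : ℕ), j < D.card ^ i →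
      (Nat.digits b (k (D.card ^ i * n + j))).sum
        = (Nat.digits b (k n)).sum + (Nat.digits b (k j)).sum := by
  set e := Nat.nth (· ∈ D)
  have hb1 : 1 < b := by omega
  have hc1 : 1 < #D := by omega
  have he0 : e 0 = 0 := Nat.nth_zero_of_zero h0
  have he : StrictMonoOn e (Set.Iio #D) := D.strictMonoOn_nth
  have heb : ∀ t < #D, e t < b := fun t ht =>
    hDb _ (by simpa using D.image_nth_Iio_card.subset (Set.mem_image_of_mem e ht))
  have hk : k = cantorEnum b #D e :=
    (hmono.range_inj (strictMono_cantorEnum hc1 he0 he heb)).mp <|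
      hrange.trans (range_cantorEnum hb1 hc1 he0 he heb D.image_nth_Iio_card).symm
  intro i n j hj
  subst hk
  exact sum_digits_cantorEnum_pow_mul_add hb1 hc1 he0 he heb hj

/-- For all `i ≥ 0`, `n ≥ 0`, and `0 ≤ j < |D|^i`,
`s_b(k_{|D|^i n + j}) = s_b(k_n) + s_b(k_j)`, where `s_b` is the base-`b`
digit sum. -/
theorem stmt2 (b : ℕ) (D : Finset ℕ) (hb : 3 ≤ b) (hDb : ∀ d ∈ D, d < b)
    (hc2 : 2 ≤ D.card) (hcb : D.card < b) (h0 : 0 ∈ D)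
    (k : ℕ → ℕ) (hmono : StrictMono k) (hrange : Set.range k = intCantorSet b D) :
    ∀ (i n j : ℕ), j < D.card ^ i →
      (Nat.digits b (k (D.card ^ i * n + j))).sum
        = (Nat.digits b (k n)).sum + (Nat.digits b (k j)).sum :=
  stmt2_general b D hb hDb hc2 h0 k hmono hrange
end

section
/- Let (k_n)_{n≥0} enumerate the integer Cantor set C_{b,D} in increasing order (0 ∈ D). Fix h ≥ 1 and k, s ∈ ℕ, and define Δ*_h(k,s) = { n ≥ 0 : k_{n+h} − k_n = k and s_b(k_{n+h}) − s_b(k_n) = s }. If Δ*_h(k,s) is nonempty then it is a (disjoint) union of arithmetic progressions, each with common difference a power of |D|. -/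
/-!
Let `F_β(n)` be obtained by writing `n` in base `|D|`, replacing each digit `x` by the `x`-th
smallest element of `D`, and reading the result in base `β`. Then `F_b` is an increasing bijection
`ℕ → C_{b,D}`, so `k_n = F_b(n)`, and `s_b(k_n) = F_1(n)`. For `r < |D|^t` we have
`F_β(r + |D|^t q) = F_β(r) + β^t F_β(q)`. Let `t(n)` be the least `t` such that adding `h` to `n`
does not carry beyond its `t` lowest base-`|D|` digits. Then `k_{n+h} - k_n` and
`s_b(k_{n+h}) - s_b(k_n)` only depend on `n mod |D|^t(n)`, and `t` is constant on that residue
class, so `Δ*_h(k,s)` is the disjoint union of the classes `i + |D|^t(i) ℕ` over its members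
`i < |D|^t(i)`.
-/

open MeasureTheory Filter Finset

def arithProg (a d : ℕ) : Set ℕ := {n | ∃ m, n = a + d * m}

theorem exists_biUnion_arithProg_of_modEq_invariant {c : ℕ} (hc : 0 < c) {L : ℕ → ℕ}
    (hL : ∀ n n', n ≡ n' [MOD c ^ L n] → L n' = L n) {S : Set ℕ}
    (hS : ∀ n n', n ≡ n' [MOD c ^ L n] → n ∈ S → n' ∈ S) :
    ∃ (I : Set ℕ) (a e : ℕ → ℕ), S = ⋃ i ∈ I, arithProg (a i) (c ^ e i) ∧
      I.PairwiseDisjoint fun i => arithProg (a i) (c ^ e i) := by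
  have hclass : ∀ i m, i ≡ i + c ^ L i * m [MOD c ^ L i] :=
    fun i m => (Nat.add_mul_mod_self_left _ _ _).symm
  refine ⟨{i ∈ S | i < c ^ L i}, id, L, Set.ext fun n => ?_, ?_⟩
  · simp only [arithProg, Set.mem_iUnion, Set.mem_ofPred_eq, id_eq, exists_prop]
    constructor
    · intro hn
      have hr : n ≡ n % c ^ L n [MOD c ^ L n] := (Nat.mod_modEq n _).symm
      have hLr : L (n % c ^ L n) = L n := hL n _ hr
      refine ⟨n % c ^ L n, ⟨hS n _ hr hn, ?_⟩, n / c ^ L n, ?_⟩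
      · rw [hLr]
        exact Nat.mod_lt _ (pow_pos hc _)
      · rw [hLr, Nat.mod_add_div]
    · rintro ⟨i, ⟨hi, -⟩, m, rfl⟩
      exact hS i _ (hclass i m) hi
  · rintro i ⟨-, hi⟩ j ⟨-, hj⟩ hij
    refine Set.disjoint_left.mpr ?_
    rintro n ⟨m, rfl⟩ ⟨m', hn⟩
    dsimp only [id] at hn
    apply hij
    have hLj : L (j + c ^ L j * m') = L j := hL _ _ (hclass j m')
    rw [← hn, hL _ _ (hclass i m)] at hLj
    calc i = i % c ^ L i := (Nat.mod_eq_of_lt hi).symm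
      _ = (j + c ^ L j * m') % c ^ L j := by rw [← hn, ← hLj]; exact hclass i m
      _ = j := by rw [← hclass j m', Nat.mod_eq_of_lt hj]

noncomputable def carryFreeLevel (c h n : ℕ) : ℕ := sInf {t | n % c ^ t + h < c ^ t}

section CarryFreeLevel

variable {c : ℕ} (h : ℕ)

theorem mod_pow_carryFreeLevel_add_lt (hc : 1 < c) (n : ℕ) :
    n % c ^ carryFreeLevel c h n + h < c ^ carryFreeLevel c h n :=
  Nat.sInf_mem (s := {t | n % c ^ t + h < c ^ t}) ⟨n + h, by
    have := Nat.lt_pow_self (n := n + h) hc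
    have := Nat.mod_le n (c ^ (n + h))
    show n % c ^ (n + h) + h < c ^ (n + h)
    omega⟩

theorem carryFreeLevel_eq_of_modEq (hc : 1 < c) {n n' : ℕ}
    (hn : n ≡ n' [MOD c ^ carryFreeLevel c h n]) :
    carryFreeLevel c h n' = carryFreeLevel c h n := by
  set t := carryFreeLevel c h n
  have hlow : ∀ u ≤ t, n % c ^ u = n' % c ^ u :=
    fun u hu => Nat.ModEq.of_dvd (pow_dvd_pow c hu) hn
  refine le_antisymm (Nat.sInf_le ?_) (not_lt.1 fun hlt => ?_)
  · show n' % c ^ t + h < c ^ t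
    rw [← hlow t le_rfl]
    exact mod_pow_carryFreeLevel_add_lt h hc n
  · have hmem := mod_pow_carryFreeLevel_add_lt h hc n'
    rw [← hlow _ hlt.le] at hmem
    exact Nat.notMem_of_lt_sInf hlt hmem

end CarryFreeLevel

def replaceDigits (c b : ℕ) (f : ℕ → ℕ) (n : ℕ) : ℕ :=
  Nat.ofDigits b ((Nat.digits c n).map f)

section ReplaceDigits

variable {c : ℕ} (b : ℕ) {f : ℕ → ℕ}

@[simp]
theorem replaceDigits_zero : replaceDigits c b f 0 = 0 := by
  simp [replaceDigits]

theorem replaceDigits_add_mul (hc : 1 < c) (hf0 : f 0 = 0) {x : ℕ} (hx : x < c) (m : ℕ) :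
    replaceDigits c b f (x + c * m) = f x + b * replaceDigits c b f m := by
  by_cases hxm : x = 0 ∧ m = 0
  · obtain ⟨rfl, rfl⟩ := hxm
    simp [hf0]
  · rw [replaceDigits, Nat.digits_add c hc x m hx (by tauto), List.map_cons, Nat.ofDigits_cons]
    rfl

theorem replaceDigits_add_pow_mul (hc : 1 < c) (hf0 : f 0 = 0) {t r : ℕ} (hr : r < c ^ t)
    (q : ℕ) :
    replaceDigits c b f (r + c ^ t * q) = replaceDigits c b f r + b ^ t * replaceDigits c b f q := by
  induction t generalizing r with
  | zero =>
    obtain rfl : r = 0 := by simpa using hr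
    simp
  | succ t ih =>
    have hrc : r / c < c ^ t := Nat.div_lt_of_lt_mul (by rwa [← pow_succ'])
    have hsplit : r + c ^ (t + 1) * q = r % c + c * (r / c + c ^ t * q) := by
      rw [pow_succ']
      nth_rw 1 [← Nat.mod_add_div r c]
      ring
    have hmod := Nat.mod_lt r (by omega : 0 < c)
    conv_rhs => rw [← Nat.mod_add_div r c]
    rw [hsplit, replaceDigits_add_mul b hc hf0 hmod, ih hrc, replaceDigits_add_mul b hc hf0 hmod,
      pow_succ']
    ring

theorem replaceDigits_add_eq_add_iff_mod (hc : 1 < c) (hf0 : f 0 = 0) {t n h κ : ℕ}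
    (hn : n % c ^ t + h < c ^ t) :
    replaceDigits c b f (n + h) = replaceDigits c b f n + κ ↔
      replaceDigits c b f (n % c ^ t + h) = replaceDigits c b f (n % c ^ t) + κ := by
  set r := n % c ^ t
  have hn_eq : n = r + c ^ t * (n / c ^ t) := (Nat.mod_add_div n _).symm
  rw [hn_eq, add_right_comm, replaceDigits_add_pow_mul b hc hf0 hn,
    replaceDigits_add_pow_mul b hc hf0 (by omega : r < c ^ t)]
  omega

theorem replaceDigits_add_eq_add_iff_of_modEq (hc : 1 < c) (hf0 : f 0 = 0) {h n n' κ : ℕ}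
    (hn : n ≡ n' [MOD c ^ carryFreeLevel c h n]) :
    replaceDigits c b f (n + h) = replaceDigits c b f n + κ ↔
      replaceDigits c b f (n' + h) = replaceDigits c b f n' + κ := by
  rw [replaceDigits_add_eq_add_iff_mod b hc hf0 (mod_pow_carryFreeLevel_add_lt h hc n),
    replaceDigits_add_eq_add_iff_mod b hc hf0 (mod_pow_carryFreeLevel_add_lt h hc n'),
    carryFreeLevel_eq_of_modEq h hc hn, hn]

variable (hc : 1 < c) (hf : StrictMonoOn f (Set.Iio c)) (hf0 : f 0 = 0)
  (hfb : ∀ x < c, f x < b)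
include hc hf hf0 hfb

theorem digits_replaceDigits (hb : 1 < b) (n : ℕ) :
    Nat.digits b (replaceDigits c b f n) = (Nat.digits c n).map f := by
  apply Nat.digits_ofDigits b hb
  · simp only [List.mem_map]
    rintro _ ⟨x, hx, rfl⟩
    exact hfb x (Nat.digits_lt_base hc hx)
  · intro hne
    have hn : n ≠ 0 := by
      rintro rfl
      simp at hne
    rw [List.getLast_map, ← hf0]
    exact hf.injOn.ne (Nat.digits_lt_base hc (List.getLast_mem _)) (show 0 < c by omega)
      (Nat.getLast_digit_ne_zero c hn)

theorem sum_digits_replaceDigits (hb : 1 < b) (n : ℕ) :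
    (Nat.digits b (replaceDigits c b f n)).sum = replaceDigits c 1 f n := by
  rw [digits_replaceDigits b hc hf hf0 hfb hb, replaceDigits, Nat.ofDigits_one]

theorem strictMono_replaceDigits : StrictMono (replaceDigits c b f) := by
  refine strictMono_nat_of_lt_succ fun n => ?_
  induction n using Nat.strong_induction_on with
  | _ n ih =>
  have hx : n % c < c := Nat.mod_lt n (by omega)
  have hn : replaceDigits c b f n = f (n % c) + b * replaceDigits c b f (n / c) := by
    rw [← replaceDigits_add_mul b hc hf0 hx, Nat.mod_add_div]
  rcases (Nat.succ_le_of_lt hx).lt_or_eq with hx1 | hx1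
  · have hsucc : n + 1 = (n % c + 1) + c * (n / c) := by
      have := Nat.mod_add_div n c
      omega
    rw [hn, hsucc, replaceDigits_add_mul b hc hf0 hx1]
    have := hf (Set.mem_Iio.2 hx) (Set.mem_Iio.2 hx1) (Nat.lt_succ_self _)
    omega
  · have hsucc : n + 1 = 0 + c * (n / c + 1) := by
      have := Nat.mod_add_div n c
      rw [mul_add]
      omega
    have hn0 : 0 < n := by
      have := Nat.mod_le n c
      omega
    have hlt : replaceDigits c b f (n / c) < replaceDigits c b f (n / c + 1) :=
      ih _ (Nat.div_lt_self hn0 hc)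
    have hmul := Nat.mul_le_mul_left b (Nat.succ_le_of_lt hlt)
    rw [Nat.succ_eq_add_one, mul_add_one] at hmul
    have := hfb _ hx
    rw [hn, hsucc, replaceDigits_add_mul b hc hf0 (by omega), hf0]
    omega

theorem range_replaceDigits (hb : 1 < b) :
    Set.range (replaceDigits c b f) = {m | ∀ d ∈ Nat.digits b m, d ∈ f '' Set.Iio c} := by
  ext m
  constructor
  · rintro ⟨n, rfl⟩ d hd
    rw [digits_replaceDigits b hc hf hf0 hfb hb] at hd
    obtain ⟨x, hx, rfl⟩ := List.mem_map.1 hd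
    exact ⟨x, Nat.digits_lt_base hc hx, rfl⟩
  · induction m using Nat.strong_induction_on with
    | _ m ih =>
    intro hm
    rcases eq_or_ne m 0 with rfl | hm0
    · exact ⟨0, replaceDigits_zero b⟩
    have hdig := Nat.digits_def' hb (Nat.pos_of_ne_zero hm0)
    obtain ⟨x, hx, hfx⟩ := hm (m % b) (by rw [hdig]; exact List.mem_cons_self ..)
    obtain ⟨q, hq⟩ := ih (m / b) (Nat.div_lt_self (Nat.pos_of_ne_zero hm0) hb)
      fun d hd => hm d (by rw [hdig]; exact List.mem_cons_of_mem _ hd)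
    exact ⟨x + c * q, by rw [replaceDigits_add_mul b hc hf0 hx, hq, hfx, Nat.mod_add_div]⟩

end ReplaceDigits

noncomputable def cantorDigit (D : Finset ℕ) (x : ℕ) : ℕ :=
  if hx : x < D.card then D.orderEmbOfFin rfl ⟨x, hx⟩ else 0

section CantorDigit

variable {D : Finset ℕ}

theorem strictMonoOn_cantorDigit : StrictMonoOn (cantorDigit D) (Set.Iio D.card) := by
  intro x hx y hy hxy
  simp only [cantorDigit, dif_pos (Set.mem_Iio.1 hx), dif_pos (Set.mem_Iio.1 hy)]
  exact (D.orderEmbOfFin rfl).strictMono (Fin.mk_lt_mk.2 hxy)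

theorem image_cantorDigit : cantorDigit D '' Set.Iio D.card = D := by
  rw [← D.range_orderEmbOfFin rfl]
  ext y
  constructor
  · rintro ⟨x, hx, rfl⟩
    exact ⟨⟨x, hx⟩, by rw [cantorDigit, dif_pos (Set.mem_Iio.1 hx)]⟩
  · rintro ⟨x, rfl⟩
    exact ⟨x, x.2, by rw [cantorDigit, dif_pos x.2]⟩

theorem cantorDigit_mem {x : ℕ} (hx : x < D.card) : cantorDigit D x ∈ D := by
  rw [← Finset.mem_coe, ← image_cantorDigit]
  exact Set.mem_image_of_mem _ hx

theorem cantorDigit_zero (h0 : 0 ∈ D) : cantorDigit D 0 = 0 := by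
  have hpos : 0 < D.card := Finset.card_pos.2 ⟨0, h0⟩
  rw [cantorDigit, dif_pos hpos, Finset.orderEmbOfFin_zero rfl hpos]
  exact Nat.le_zero.1 (D.min'_le 0 h0)

end CantorDigit

theorem stmt3_general (b : ℕ) (D : Finset ℕ) (hb : 3 ≤ b) (hDb : ∀ d ∈ D, d < b)
    (hc2 : 2 ≤ D.card) (h0 : 0 ∈ D)
    (k : ℕ → ℕ) (hmono : StrictMono k) (hrange : Set.range k = intCantorSet b D)
    (h : ℕ) (κ s : ℕ) :
    ∃ (I : Set ℕ) (a : ℕ → ℕ) (e : ℕ → ℕ),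
      {n : ℕ | k (n + h) = k n + κ ∧
          (Nat.digits b (k (n + h))).sum = (Nat.digits b (k n)).sum + s}
        = ⋃ i ∈ I, {n : ℕ | ∃ m : ℕ, n = a i + D.card ^ (e i) * m} ∧
      I.PairwiseDisjoint
        (fun i => {n : ℕ | ∃ m : ℕ, n = a i + D.card ^ (e i) * m}) := by
  have hb1 : 1 < b := by omega
  have hf0 := cantorDigit_zero h0
  have hfb : ∀ x < D.card, cantorDigit D x < b := fun x hx => hDb _ (cantorDigit_mem hx)
  obtain rfl : k = replaceDigits D.card b (cantorDigit D) := by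
    refine (hmono.range_inj (strictMono_replaceDigits b hc2 strictMonoOn_cantorDigit hf0 hfb)).1 ?_
    rw [hrange, range_replaceDigits b hc2 strictMonoOn_cantorDigit hf0 hfb hb1, image_cantorDigit]
    rfl
  simp only [sum_digits_replaceDigits b hc2 strictMonoOn_cantorDigit hf0 hfb hb1]
  exact exists_biUnion_arithProg_of_modEq_invariant (by omega)
    (fun _ _ => carryFreeLevel_eq_of_modEq h hc2) fun _ _ hn => And.imp
      (replaceDigits_add_eq_add_iff_of_modEq b hc2 hf0 hn).1
      (replaceDigits_add_eq_add_iff_of_modEq 1 hc2 hf0 hn).1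

/-- If `Δ*_h(κ,s) = {n : k_{n+h} - k_n = κ, s_b(k_{n+h}) - s_b(k_n) = s}` is
nonempty, then it is a disjoint union of arithmetic progressions, each with
common difference a power of `|D|`. -/
theorem stmt3 (b : ℕ) (D : Finset ℕ) (hb : 3 ≤ b) (hDb : ∀ d ∈ D, d < b)
    (hc2 : 2 ≤ D.card) (hcb : D.card < b) (h0 : 0 ∈ D)
    (k : ℕ → ℕ) (hmono : StrictMono k) (hrange : Set.range k = intCantorSet b D)
    (h : ℕ) (hh : 1 ≤ h) (κ s : ℕ)
    (hne : {n : ℕ | k (n + h) = k n + κ ∧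
      (Nat.digits b (k (n + h))).sum = (Nat.digits b (k n)).sum + s}.Nonempty) :
    ∃ (I : Set ℕ) (a : ℕ → ℕ) (e : ℕ → ℕ),
      {n : ℕ | k (n + h) = k n + κ ∧
          (Nat.digits b (k (n + h))).sum = (Nat.digits b (k n)).sum + s}
        = ⋃ i ∈ I, {n : ℕ | ∃ m : ℕ, n = a i + D.card ^ (e i) * m} ∧
      I.PairwiseDisjoint
        (fun i => {n : ℕ | ∃ m : ℕ, n = a i + D.card ^ (e i) * m}) :=
  stmt3_general b D hb hDb hc2 h0 k hmono hrange h κ s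
end

section
/- Let (k_n)_{n≥1} enumerate the integer Cantor set C_{b,D} (with 0 ∈ D) in increasing order. Then for every irrational α, the sequence (α k_n mod 1) is equidistributed in [0,1); in particular lim_{N→∞} (1/N) Σ_{n=1}^N e^{2πi α k_n} = 0. -/
open MeasureTheory Filter Finset

/-!
Let `T(α, M)` be the Weyl sum of `e(α m) = exp(2πiαm)` over the Cantor integers `m < M` and
`S(α) = ∑_{d ∈ D} e(α d)`. Splitting off the last base-`b` digit, `M = bq + r` with `r < b`,
gives `T(α, M) = S(α) T(bα, q) + O(|D|)`; iterating,
`|T(α, M)| ≤ |D| ∑_{i ≤ log_b M} ∏_{j < i} |S(α b^j)|`, while there are at least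
`|D|^(log_b M)` Cantor integers below `M`. Since `α d₀` is irrational for a nonzero digit `d₀`,
infinitely many `α d₀ b^j` stay at distance `≥ 1/(2(b+1))` from `ℤ`, and for those `j` the
terms of the digits `0` and `d₀` in `S(α b^j)` partly cancel: `|S(α b^j)| ≤ ρ < |D|`. So the
normalized products `∏_{j<i} |S(α b^j)| / |D|^i` tend to `0`, and with them `T(α, k_N) / N`.
-/

open Complex
open scoped Real Topology

theorem tendsto_prod_range_zero_of_frequently_le {f : ℕ → ℝ} {ρ : ℝ} (hf0 : ∀ j, 0 ≤ f j)
    (hf1 : ∀ j, f j ≤ 1) (hρ : ρ < 1) (h : ∃ᶠ j in atTop, f j ≤ ρ) :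
    Tendsto (fun n => ∏ j ∈ range n, f j) atTop (𝓝 0) := by
  have hanti : Antitone fun n => ∏ j ∈ range n, f j := antitone_nat_of_succ_le fun n => by
    rw [prod_range_succ]
    exact mul_le_of_le_one_right (prod_nonneg fun j _ => hf0 j) (hf1 n)
  have hρ0 : 0 ≤ ρ := by
    obtain ⟨j, hj⟩ := h.exists
    exact (hf0 j).trans hj
  have hsmall : ∀ k : ℕ, ∃ N, ∏ j ∈ range N, f j ≤ ρ ^ k := by
    intro k
    induction k with
    | zero => exact ⟨0, by simp⟩
    | succ k ih =>
      obtain ⟨N, hN⟩ := ih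
      obtain ⟨j, hjN, hj⟩ := frequently_atTop.1 h N
      refine ⟨j + 1, ?_⟩
      rw [prod_range_succ, pow_succ]
      exact mul_le_mul ((hanti hjN).trans hN) hj (hf0 j) (pow_nonneg hρ0 k)
  refine tendsto_order.2 ⟨fun a ha => Eventually.of_forall fun n =>
    ha.trans_le (prod_nonneg fun j _ => hf0 j), fun a ha => ?_⟩
  obtain ⟨k, hk⟩ := exists_pow_lt_of_lt_one ha hρ
  obtain ⟨N, hN⟩ := hsmall k
  exact eventually_atTop.2 ⟨N, fun n hn => ((hanti hn).trans hN).trans_lt hk⟩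

theorem tendsto_sum_range_div_pow_of_tendsto {c : ℝ} (hc : 1 < c) {u : ℕ → ℝ}
    (h : Tendsto (fun n => u n / c ^ n) atTop (𝓝 0)) :
    Tendsto (fun n => (∑ i ∈ range n, u i) / c ^ n) atTop (𝓝 0) := by
  have hc0 : 0 < c - 1 := sub_pos.2 hc
  have hpow : ∀ n, 0 < c ^ n := fun n => pow_pos (by linarith) n
  have hu : u =o[atTop] (c ^ ·) :=
    (Asymptotics.isLittleO_iff_tendsto fun n hn => absurd hn (hpow n).ne').2 h
  have hgeom : ∀ n, ∑ i ∈ range n, c ^ i = (c ^ n - 1) / (c - 1) := fun n => geom_sum_eq hc.ne' n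
  have hsum : Tendsto (fun n => ∑ i ∈ range n, c ^ i) atTop atTop := by
    simp_rw [hgeom]
    exact (tendsto_atTop_add_const_right _ (-1)
      (tendsto_pow_atTop_atTop_of_one_lt hc)).atTop_div_const hc0
  have hbig : (fun n => ∑ i ∈ range n, c ^ i) =O[atTop] (c ^ ·) := by
    refine Asymptotics.IsBigO.of_bound (1 / (c - 1)) (Eventually.of_forall fun n => ?_)
    rw [Real.norm_of_nonneg (sum_nonneg fun i _ => (hpow i).le),
      Real.norm_of_nonneg (hpow n).le, hgeom, one_div_mul_eq_div]
    exact div_le_div_of_nonneg_right (by linarith) hc0.le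
  exact ((hu.sum_range (fun i => (hpow i).le) hsum).trans_isBigO hbig).tendsto_div_nhds_zero

theorem Irrational.frequently_le_abs_sub_round_mul_pow {θ : ℝ} (hθ : Irrational θ) {b : ℕ}
    (hb : 1 < b) : ∃ᶠ j in atTop, 1 / (2 * (b + 1)) ≤ |θ * b ^ j - round (θ * b ^ j)| := by
  rw [frequently_atTop]
  intro J
  by_contra! hnear
  -- The errors `x t` of the nearest integers `m t` to `θ b^(J+t)` then obey `x (t+1) = b x t`,
  -- as `b m t - m (t+1)` is an integer of size `< (b+1) ε = 1/2`; being bounded, `x 0 = 0`,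
  -- i.e. `θ b^J ∈ ℤ`.
  have hb1 : (1 : ℝ) < b := by exact_mod_cast hb
  set ε : ℝ := 1 / (2 * (b + 1)) with hε
  set m : ℕ → ℤ := fun t => round (θ * b ^ (J + t))
  set x : ℕ → ℝ := fun t => θ * b ^ (J + t) - m t with hx
  have hxε : ∀ t, |x t| < ε := fun t => hnear _ (by omega)
  have hstep : ∀ t, x (t + 1) = b * x t := by
    intro t
    have hint : ((b * m t - m (t + 1) : ℤ) : ℝ) = x (t + 1) - b * x t := by
      simp only [hx, ← add_assoc, pow_succ]
      push_cast
      ring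
    have hlt : |((b * m t - m (t + 1) : ℤ) : ℝ)| < 1 :=
      calc |((b * m t - m (t + 1) : ℤ) : ℝ)| = |x (t + 1) - b * x t| := by rw [hint]
        _ ≤ |x (t + 1)| + |b * x t| := abs_sub _ _
        _ = |x (t + 1)| + b * |x t| := by rw [abs_mul, Nat.abs_cast]
        _ < ε + b * ε := by gcongr <;> exact hxε _
        _ < 1 := by rw [hε]; field_simp; linarith
    have := Int.abs_lt_one_iff.1 (by exact_mod_cast hlt)
    rw [this, Int.cast_zero] at hint
    linarith
  have hpow : ∀ t, x t = b ^ t * x 0 := by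
    intro t
    induction t with
    | zero => simp
    | succ t ih => rw [hstep, ih, pow_succ]; ring
  have hx0 : x 0 = 0 := by
    by_contra hne
    obtain ⟨t, ht⟩ := pow_unbounded_of_one_lt (ε / |x 0|) hb1
    have := hxε t
    rw [hpow, abs_mul, abs_of_pos (pow_pos (by linarith) t)] at this
    rw [div_lt_iff₀ (abs_pos.2 hne)] at ht
    linarith
  refine (hθ.mul_natCast (pow_ne_zero J (by omega : b ≠ 0))).ne_int (m 0) ?_
  simpa [hx, sub_eq_zero] using hx0

theorem norm_cexp_two_pi_I_mul_mul_natCast (α : ℝ) (m : ℕ) : ‖exp (2 * π * I * α * m)‖ = 1 := by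
  rw [show 2 * π * I * α * m = ((2 * π * α * m : ℝ) : ℂ) * I by push_cast; ring,
    norm_exp_ofReal_mul_I]

theorem norm_sum_cexp_le_card (s : Finset ℕ) (α : ℝ) :
    ‖∑ m ∈ s, exp (2 * π * I * α * m)‖ ≤ #s :=
  (norm_sum_le _ _).trans_eq (by simp [norm_cexp_two_pi_I_mul_mul_natCast])

theorem norm_one_add_cexp_le {x ε : ℝ} (hε : 0 ≤ ε) (hx : ε ≤ |x - round x|) :
    ‖1 + exp (2 * π * I * x)‖ ≤ √(2 + 2 * Real.cos (2 * π * ε)) := by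
  have hsq : ‖1 + exp (2 * π * I * x)‖ ^ 2 = 2 + 2 * Real.cos (2 * π * x) := by
    rw [show 2 * π * I * x = ((2 * π * x : ℝ) : ℂ) * I by push_cast; ring, exp_mul_I,
      Complex.sq_norm, normSq_apply]
    simp only [add_re, add_im, one_re, one_im, mul_re, mul_im, cos_ofReal_re, cos_ofReal_im,
      sin_ofReal_re, sin_ofReal_im, I_re, I_im]
    nlinarith [Real.sin_sq_add_cos_sq (2 * π * x)]
  have hcos : Real.cos (2 * π * x) ≤ Real.cos (2 * π * ε) := by
    have hround : Real.cos (2 * π * |x - round x|) = Real.cos (2 * π * x) := by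
      rw [show 2 * π * |x - round x| = |2 * π * (x - round x)| by
          rw [abs_mul, abs_of_pos Real.two_pi_pos],
        Real.cos_abs, mul_sub, mul_comm (2 * π) (round x : ℝ), Real.cos_sub_int_mul_two_pi]
    rw [← hround]
    exact Real.cos_le_cos_of_nonneg_of_le_pi (by positivity)
      (by nlinarith [abs_sub_round x, Real.pi_pos]) (by nlinarith [Real.pi_pos])
  rw [Real.le_sqrt (norm_nonneg _) (by nlinarith [Real.neg_one_le_cos (2 * π * ε)]), hsq]
  linarith

namespace IntCantorSet

instance decidableMem (b : ℕ) (D : Finset ℕ) : DecidablePred (· ∈ intCantorSet b D) :=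
  fun m => inferInstanceAs (Decidable (∀ d ∈ Nat.digits b m, d ∈ D))

variable {b : ℕ} {D : Finset ℕ}

theorem zero_mem : 0 ∈ intCantorSet b D := by
  simp [intCantorSet]

theorem mul_add_mem_iff (hb : 1 < b) (h0 : 0 ∈ D) {i j : ℕ} (hj : j < b) :
    b * i + j ∈ intCantorSet b D ↔ i ∈ intCantorSet b D ∧ j ∈ D := by
  by_cases hij : j = 0 ∧ i = 0
  · obtain ⟨rfl, rfl⟩ := hij
    simp [zero_mem, h0]
  · simp only [intCantorSet, Set.mem_ofPred_eq, add_comm (b * i),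
      Nat.digits_add b hb j i hj (by tauto), List.mem_cons, forall_eq_or_imp]
    exact and_comm

variable (b D) in
def below (M : ℕ) : Finset ℕ := {m ∈ range M | m ∈ intCantorSet b D}

theorem below_mono : Monotone (below b D) := fun _ _ h =>
  filter_subset_filter _ (range_mono h)

theorem mem_below {M m : ℕ} : m ∈ below b D M ↔ m < M ∧ m ∈ intCantorSet b D := by
  simp [below]

theorem below_mul (hb : 1 < b) (h0 : 0 ∈ D) (hDb : ∀ d ∈ D, d < b) (q : ℕ) :
    below b D (b * q) = (below b D q ×ˢ D).image (fun p => b * p.1 + p.2) := by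
  ext m
  simp only [mem_image, mem_product, mem_below, Prod.exists]
  constructor
  · rintro ⟨hm, hmC⟩
    have hmod : m % b < b := Nat.mod_lt m (by omega)
    rw [← Nat.div_add_mod m b, mul_add_mem_iff hb h0 hmod] at hmC
    refine ⟨m / b, m % b, ⟨⟨?_, hmC.1⟩, hmC.2⟩, Nat.div_add_mod m b⟩
    exact Nat.div_lt_of_lt_mul hm
  · rintro ⟨i, d, ⟨⟨hi, hiC⟩, hd⟩, rfl⟩
    refine ⟨?_, (mul_add_mem_iff hb h0 (hDb d hd)).2 ⟨hiC, hd⟩⟩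
    have := hDb d hd
    nlinarith

theorem injOn_mul_add (hDb : ∀ d ∈ D, d < b) (s : Finset ℕ) :
    Set.InjOn (fun p : ℕ × ℕ => b * p.1 + p.2) ↑(s ×ˢ D) := by
  rintro ⟨i, d⟩ hid ⟨i', d'⟩ hid' h
  simp only [coe_product, Set.mem_prod, mem_coe] at hid hid' h
  have hd := hDb d hid.2
  have hd' := hDb d' hid'.2
  obtain rfl : i = i' := by
    by_contra hne
    rcases Nat.lt_or_gt_of_ne hne with hlt | hlt <;> nlinarith
  simp_all

theorem sum_below_mul {M : Type*} [AddCommMonoid M] (hb : 1 < b) (h0 : 0 ∈ D)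
    (hDb : ∀ d ∈ D, d < b) (q : ℕ) (f : ℕ → M) :
    ∑ m ∈ below b D (b * q), f m = ∑ i ∈ below b D q, ∑ d ∈ D, f (b * i + d) := by
  rw [below_mul hb h0 hDb, sum_image (injOn_mul_add hDb _), sum_product]

theorem card_below_pow (hb : 1 < b) (h0 : 0 ∈ D) (hDb : ∀ d ∈ D, d < b) (n : ℕ) :
    #(below b D (b ^ n)) = #D ^ n := by
  induction n with
  | zero => simp [below, filter_singleton, zero_mem]
  | succ n ih =>
    rw [pow_succ', card_eq_sum_ones, sum_below_mul hb h0 hDb, pow_succ, ← ih, card_eq_sum_ones,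
      sum_mul]
    simp

theorem card_below_sdiff_below_mul_le (hb : 1 < b) (h0 : 0 ∈ D) {q M : ℕ}
    (hM : M ≤ b * (q + 1)) : #(below b D M \ below b D (b * q)) ≤ #D := by
  have hdiv : ∀ m ∈ below b D M \ below b D (b * q), m / b = q := by
    intro m hm
    simp only [Finset.mem_sdiff, mem_below, not_and] at hm
    have : b * q ≤ m := not_lt.1 fun h => hm.2 h hm.1.2
    exact Nat.div_eq_of_lt_le (by linarith) (by linarith)
  refine card_le_card_of_injOn (· % b) (fun m hm => ?_) (fun m hm m' hm' h => ?_)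
  · have hmC := (mem_below.1 (Finset.mem_sdiff.1 hm).1).2
    rw [← Nat.div_add_mod m b, mul_add_mem_iff hb h0 (Nat.mod_lt m (by omega))] at hmC
    exact hmC.2
  · rw [← Nat.div_add_mod m b, ← Nat.div_add_mod m' b, hdiv m hm, hdiv m' hm']
    exact congrArg (b * q + ·) h

theorem below_eq_image_range {k : ℕ → ℕ} (hmono : StrictMono k)
    (hrange : Set.range k = intCantorSet b D) (N : ℕ) :
    below b D (k N) = (range N).image k := by
  ext m
  simp only [mem_below, mem_image, mem_range, ← hrange, Set.mem_range]
  constructor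
  · rintro ⟨hm, n, rfl⟩
    exact ⟨n, hmono.lt_iff_lt.1 hm, rfl⟩
  · rintro ⟨n, hn, rfl⟩
    exact ⟨hmono.lt_iff_lt.2 hn, n, rfl⟩

variable (b D) in
noncomputable def expSum (α : ℝ) (M : ℕ) : ℂ := ∑ m ∈ below b D M, exp (2 * π * I * α * m)

variable (D) in
noncomputable def digitSum (α : ℝ) : ℂ := ∑ d ∈ D, exp (2 * π * I * α * d)

theorem expSum_mul (hb : 1 < b) (h0 : 0 ∈ D) (hDb : ∀ d ∈ D, d < b) (α : ℝ) (q : ℕ) :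
    expSum b D α (b * q) = digitSum D α * expSum b D (α * b) q := by
  rw [expSum, sum_below_mul hb h0 hDb, expSum, digitSum, sum_mul_sum, sum_comm]
  refine sum_congr rfl fun i _ => sum_congr rfl fun d _ => ?_
  rw [← exp_add]
  push_cast
  ring_nf

theorem norm_expSum_le (hb : 1 < b) (h0 : 0 ∈ D) (hDb : ∀ d ∈ D, d < b) {n : ℕ} (α : ℝ)
    {M : ℕ} (hM : M < b ^ n) :
    ‖expSum b D α M‖ ≤ #D * ∑ i ∈ range n, ∏ j ∈ range i, ‖digitSum D (α * b ^ j)‖ := by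
  induction n generalizing α M with
  | zero =>
    obtain rfl : M = 0 := by simpa using hM
    simp [expSum, below]
  | succ n ih =>
    set q := M / b
    have hq : q < b ^ n := Nat.div_lt_of_lt_mul (by rwa [← pow_succ'])
    have hMq : M ≤ b * (q + 1) := (Nat.lt_mul_div_succ M (by omega)).le
    have hsplit : expSum b D α M = digitSum D α * expSum b D (α * b) q +
        ∑ m ∈ below b D M \ below b D (b * q), exp (2 * π * I * α * m) := by
      rw [← expSum_mul hb h0 hDb, expSum, expSum, ← sum_sdiff (below_mono (Nat.mul_div_le M b)),
        add_comm]
    calc ‖expSum b D α M‖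
        ≤ ‖digitSum D α‖ * ‖expSum b D (α * b) q‖ + #D := by
          rw [hsplit]
          refine (norm_add_le _ _).trans (add_le_add (norm_mul _ _).le ?_)
          exact (norm_sum_cexp_le_card _ α).trans
            (by exact_mod_cast card_below_sdiff_below_mul_le hb h0 hMq)
      _ ≤ ‖digitSum D α‖ * (#D * ∑ i ∈ range n, ∏ j ∈ range i, ‖digitSum D (α * b * b ^ j)‖) +
            #D := by
          gcongr
          exact ih (α * b) hq
      _ = #D * ∑ i ∈ range (n + 1), ∏ j ∈ range i, ‖digitSum D (α * b ^ j)‖ := by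
          simp only [sum_range_succ', prod_range_succ', pow_succ', pow_zero, mul_one,
            prod_range_zero, mul_sum, mul_add, mul_assoc]
          exact congrArg (· + _) (sum_congr rfl fun _ _ => by ring)

theorem pow_card_le_card_below (hb : 1 < b) (h0 : 0 ∈ D) (hDb : ∀ d ∈ D, d < b) {M : ℕ}
    (hM : M ≠ 0) : #D ^ Nat.log b M ≤ #(below b D M) := by
  rw [← card_below_pow hb h0 hDb]
  exact card_le_card (below_mono (Nat.pow_log_le_self b hM))

theorem norm_expSum_div_card_le (hb : 1 < b) (h0 : 0 ∈ D) (hDb : ∀ d ∈ D, d < b) (α : ℝ)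
    {M : ℕ} (hM : M ≠ 0) :
    ‖expSum b D α M‖ / #(below b D M) ≤ #D ^ 2 *
      ((∑ i ∈ range (Nat.log b M + 1), ∏ j ∈ range i, ‖digitSum D (α * b ^ j)‖) /
        #D ^ (Nat.log b M + 1)) := by
  set n := Nat.log b M
  have hD : (0 : ℝ) < #D := by exact_mod_cast card_pos.2 ⟨0, h0⟩
  have hcard : (#D : ℝ) ^ n ≤ #(below b D M) := by
    exact_mod_cast pow_card_le_card_below hb h0 hDb hM
  calc ‖expSum b D α M‖ / #(below b D M)
      ≤ (#D * ∑ i ∈ range (n + 1), ∏ j ∈ range i, ‖digitSum D (α * b ^ j)‖) / #D ^ n :=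
        div_le_div₀ (by positivity) (norm_expSum_le hb h0 hDb α (Nat.lt_pow_succ_log_self hb M))
          (by positivity) hcard
    _ = _ := by
        field_simp
        ring

theorem norm_digitSum_le (h0 : 0 ∈ D) {d₀ : ℕ} (hd₀ : d₀ ∈ D) (hd₀0 : d₀ ≠ 0) (α : ℝ) :
    ‖digitSum D α‖ ≤ #D - 2 + ‖1 + exp (2 * π * I * (α * d₀ : ℝ))‖ := by
  have hsub : {0, d₀} ⊆ D := insert_subset h0 (singleton_subset_iff.2 hd₀)
  have hpair : ∑ d ∈ {0, d₀}, exp (2 * π * I * α * d) = 1 + exp (2 * π * I * (α * d₀ : ℝ)) := by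
    rw [sum_pair hd₀0.symm]
    push_cast
    simp [mul_assoc]
  have hrest : ‖∑ d ∈ D \ {0, d₀}, exp (2 * π * I * α * d)‖ ≤ #D - 2 := by
    refine (norm_sum_cexp_le_card _ α).trans_eq ?_
    have h2 : 2 ≤ #D := card_pair hd₀0.symm ▸ card_le_card hsub
    rw [card_sdiff_of_subset hsub, card_pair hd₀0.symm, Nat.cast_sub h2, Nat.cast_ofNat]
  rw [digitSum, ← sum_sdiff hsub, hpair]
  exact (norm_add_le _ _).trans (by linarith)

theorem tendsto_sum_prod_norm_digitSum_div_pow (hb : 1 < b) (h0 : 0 ∈ D) {d₀ : ℕ}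
    (hd₀ : d₀ ∈ D) (hd₀0 : d₀ ≠ 0) {α : ℝ} (hα : Irrational α) :
    Tendsto (fun n => (∑ i ∈ range n, ∏ j ∈ range i, ‖digitSum D (α * b ^ j)‖) / #D ^ n)
      atTop (𝓝 0) := by
  have hD : (1 : ℝ) < #D := by exact_mod_cast one_lt_card.2 ⟨0, h0, d₀, hd₀, hd₀0.symm⟩
  set ε : ℝ := 1 / (2 * (b + 1))
  have hε : 0 < ε := by positivity
  set ρ := √(2 + 2 * Real.cos (2 * π * ε))
  have hρ : ρ < 2 := by
    have hε2 : ε ≤ 1 / 2 := by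
      simp only [ε]
      gcongr
      linarith [b.cast_nonneg (α := ℝ)]
    have hcos : Real.cos (2 * π * ε) < 1 := by
      simpa using Real.cos_lt_cos_of_nonneg_of_le_pi le_rfl (by nlinarith [Real.pi_pos])
        (by positivity : 0 < 2 * π * ε)
    exact (Real.sqrt_lt' two_pos).2 (by linarith)
  have hfar : ∃ᶠ j in atTop, ‖digitSum D (α * b ^ j)‖ / #D ≤ (#D - 2 + ρ) / #D := by
    refine ((hα.mul_natCast hd₀0).frequently_le_abs_sub_round_mul_pow hb).mono fun j hj => ?_
    have h1 := norm_one_add_cexp_le hε.le hj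
    rw [mul_right_comm α] at h1
    gcongr
    exact (norm_digitSum_le h0 hd₀ hd₀0 _).trans (by linarith)
  refine tendsto_sum_range_div_pow_of_tendsto hD ?_
  have hdiv : ∀ n, (∏ j ∈ range n, ‖digitSum D (α * b ^ j)‖) / #D ^ n =
      ∏ j ∈ range n, ‖digitSum D (α * b ^ j)‖ / #D := fun n => by
    rw [prod_div_distrib, prod_const, card_range]
  simp_rw [hdiv]
  exact tendsto_prod_range_zero_of_frequently_le (fun j => by positivity)
    (fun j => div_le_one_of_le₀ (norm_sum_cexp_le_card D _) (by positivity))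
    ((div_lt_one (by linarith)).2 (by linarith)) hfar

end IntCantorSet

open IntCantorSet in
theorem stmt5_general (b : ℕ) (D : Finset ℕ) (hb : 3 ≤ b) (hDb : ∀ d ∈ D, d < b)
    (hc2 : 2 ≤ D.card) (h0 : 0 ∈ D)
    (k : ℕ → ℕ) (hmono : StrictMono k) (hrange : Set.range k = intCantorSet b D)
    (α : ℝ) (hα : Irrational α) :
    Tendsto (fun N : ℕ => (N : ℂ)⁻¹ *
        ∑ n ∈ Finset.range N,
          Complex.exp (2 * Real.pi * Complex.I * α * (k n : ℂ)))
      atTop (nhds 0) := by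
  obtain ⟨d₀, hd₀, hd₀0⟩ := D.exists_mem_ne (by omega : 1 < #D) 0
  have hlog : Tendsto (fun N => Nat.log b (k N) + 1) atTop atTop :=
    (tendsto_add_atTop_nat 1).comp <| (tendsto_atTop_atTop.2 fun n =>
      ⟨b ^ n, fun _ hm => Nat.le_log_of_pow_le (b := b) (by omega) hm⟩).comp hmono.tendsto_atTop
  have hdecay := ((tendsto_sum_prod_norm_digitSum_div_pow (b := b) (by omega) h0 hd₀ hd₀0 hα).comp
    hlog).const_mul ((#D : ℝ) ^ 2)
  rw [mul_zero] at hdecay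
  refine squeeze_zero_norm' ?_ hdecay
  filter_upwards [eventually_ge_atTop 1] with N hN
  have hbelow := below_eq_image_range hmono hrange N
  have hsum : ∑ n ∈ range N, exp (2 * π * I * α * (k n : ℂ)) = expSum b D α (k N) := by
    rw [expSum, hbelow, sum_image hmono.injective.injOn]
  have hcard : (N : ℝ) = #(below b D (k N)) := by
    rw [hbelow, card_image_of_injective _ hmono.injective, card_range]
  rw [hsum, norm_mul, norm_inv, Complex.norm_natCast, ← div_eq_inv_mul, hcard]
  exact norm_expSum_div_card_le (by omega) h0 hDb α (hmono.le_apply.trans_lt' hN).ne'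

/-- For every irrational `α`, the sequence `(α k_n)` is equidistributed mod 1:
all the nonzero-frequency Weyl sums tend to `0`. -/
theorem stmt5 (b : ℕ) (D : Finset ℕ) (hb : 3 ≤ b) (hDb : ∀ d ∈ D, d < b)
    (hc2 : 2 ≤ D.card) (hcb : D.card < b) (h0 : 0 ∈ D)
    (k : ℕ → ℕ) (hmono : StrictMono k) (hrange : Set.range k = intCantorSet b D)
    (α : ℝ) (hα : Irrational α) :
    Tendsto (fun N : ℕ => (N : ℂ)⁻¹ *
        ∑ n ∈ Finset.range N,
          Complex.exp (2 * Real.pi * Complex.I * α * (k n : ℂ)))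
      atTop (nhds 0) :=
  stmt5_general b D hb hDb hc2 h0 k hmono hrange α hα
end

section
/- Let (X, 𝒜, μ, T) be a weakly mixing measure-preserving system. Then for every integer t ≥ 1, the product system (X^t, μ^{⊗t}, T × T² × ⋯ × T^t) is weakly mixing. -/
/-!
Write `S` for `T × T² × ⋯ × T^t` and `ν` for `μ^{⊗t}`.
For boxes `∏ Aᵢ`, `∏ Bᵢ` the measure of `∏ Aᵢ ∩ S⁻ⁿ (∏ Bᵢ)` factorises as
`∏ μ(Aᵢ ∩ T^{-(i+1)n} Bᵢ)`, so `|∏ aᵢ - ∏ bᵢ| ≤ ∑ |aᵢ - bᵢ|` bounds the mixing defect of the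
product by the sum of the defects of the powers `T^{i+1}`. Each of these is Cesàro-null, since
restricting the Cesàro average of `T` to the multiples of `i+1` costs at most a factor `i+1`.

In each variable the defect is additive on disjoint sets, changes sign under complement, and
(because `S` preserves `ν`) moves by at most twice the measure of the symmetric difference. Hence
the sets with Cesàro-null defect form a Dynkin system, and the π-λ theorem extends the property
from boxes to all measurable sets.
-/

open MeasureTheory Filter Finset

/-- A measure-preserving map `T` is weakly mixing if for all measurable sets
`A, B` the Cesàro averages of `|μ(A ∩ T^{-n}B) - μ(A)μ(B)|` tend to `0`. -/
def IsWeakMixing {X : Type*} [MeasurableSpace X] (μ : Measure X) (T : X → X) :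
    Prop :=
  ∀ A B : Set X, MeasurableSet A → MeasurableSet B →
    Tendsto (fun N : ℕ => (N : ℝ)⁻¹ * ∑ n ∈ Finset.Icc 1 N,
        |(μ (A ∩ T^[n] ⁻¹' B)).toReal - (μ A).toReal * (μ B).toReal|)
      atTop (nhds 0)

open MeasurableSpace
open scoped symmDiff Topology

lemma abs_prod_sub_prod_le_sum_abs_sub {ι : Type*} (s : Finset ι) {a b : ι → ℝ}
    (ha : ∀ i ∈ s, |a i| ≤ 1) (hb : ∀ i ∈ s, |b i| ≤ 1) :
    |∏ i ∈ s, a i - ∏ i ∈ s, b i| ≤ ∑ i ∈ s, |a i - b i| := by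
  classical
  induction s using Finset.induction_on with
  | empty => simp
  | @insert j s hj ih =>
    rw [prod_insert hj, prod_insert hj, sum_insert hj]
    have ih := ih (fun i hi => ha i (mem_insert_of_mem hi))
      (fun i hi => hb i (mem_insert_of_mem hi))
    have haj : |a j| ≤ 1 := ha j (mem_insert_self j s)
    have hbs : |∏ i ∈ s, b i| ≤ 1 := by
      rw [abs_prod]
      exact prod_le_one (fun _ _ => abs_nonneg _) fun i hi => hb i (mem_insert_of_mem hi)
    calc |a j * ∏ i ∈ s, a i - b j * ∏ i ∈ s, b i|
        = |a j * (∏ i ∈ s, a i - ∏ i ∈ s, b i) + (a j - b j) * ∏ i ∈ s, b i| := by ring_nf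
      _ ≤ |a j| * |∏ i ∈ s, a i - ∏ i ∈ s, b i| + |a j - b j| * |∏ i ∈ s, b i| := by
        rw [← abs_mul, ← abs_mul]; exact abs_add_le _ _
      _ ≤ 1 * ∑ i ∈ s, |a i - b i| + |a j - b j| * 1 := by gcongr
      _ = |a j - b j| + ∑ i ∈ s, |a i - b i| := by ring

def CesaroNull (a : ℕ → ℝ) : Prop :=
  Tendsto (fun N : ℕ => (N : ℝ)⁻¹ * ∑ n ∈ Icc 1 N, |a n|) atTop (𝓝 0)

namespace CesaroNull

variable {a b : ℕ → ℝ}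

lemma zero : CesaroNull 0 := by
  simp [CesaroNull]

lemma mono (hb : CesaroNull b) (h : ∀ n, |a n| ≤ |b n|) : CesaroNull a :=
  squeeze_zero (fun _ => by positivity)
    (fun _ => mul_le_mul_of_nonneg_left (sum_le_sum fun n _ => h n) (by positivity)) hb

lemma abs (ha : CesaroNull a) : CesaroNull fun n => |a n| :=
  ha.mono fun n => (abs_abs (a n)).le

lemma neg (ha : CesaroNull a) : CesaroNull (-a) :=
  ha.mono fun n => (abs_neg (a n)).le

lemma add (ha : CesaroNull a) (hb : CesaroNull b) : CesaroNull (a + b) := by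
  refine squeeze_zero (fun _ => by positivity) (fun N => ?_) (by simpa using Tendsto.add ha hb)
  rw [← mul_add, ← sum_add_distrib]
  exact mul_le_mul_of_nonneg_left (sum_le_sum fun n _ => abs_add_le (a n) (b n)) (by positivity)

lemma sum {ι : Type*} {s : Finset ι} {a : ι → ℕ → ℝ} (h : ∀ i ∈ s, CesaroNull (a i)) :
    CesaroNull (∑ i ∈ s, a i) :=
  sum_induction _ CesaroNull (fun _ _ => add) zero h

lemma comp_mul (ha : CesaroNull a) {k : ℕ} (hk : 0 < k) : CesaroNull fun n => a (k * n) := by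
  have hsum : ∀ N, ∑ n ∈ Icc 1 N, |a (k * n)| ≤ ∑ m ∈ Icc 1 (k * N), |a m| := by
    intro N
    rw [← sum_image (f := fun m => |a m|) fun x _ y _ h => Nat.eq_of_mul_eq_mul_left hk h]
    refine sum_le_sum_of_subset_of_nonneg (fun m hm => ?_) fun _ _ _ => abs_nonneg _
    obtain ⟨n, hn, rfl⟩ := mem_image.1 hm
    simp only [mem_Icc] at hn ⊢
    exact ⟨hn.1.trans (Nat.le_mul_of_pos_left n hk), Nat.mul_le_mul_left k hn.2⟩
  have hlim : Tendsto (fun N : ℕ => (k : ℝ) * (((k * N : ℕ) : ℝ)⁻¹ *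
      ∑ m ∈ Icc 1 (k * N), |a m|)) atTop (𝓝 0) := by
    simpa using (ha.comp (tendsto_id.const_mul_atTop' hk)).const_mul (k : ℝ)
  refine squeeze_zero (fun _ => by positivity) (fun N => ?_) hlim
  have hk' : (k : ℝ) ≠ 0 := by positivity
  rw [Nat.cast_mul, mul_inv, ← mul_assoc, ← mul_assoc, mul_inv_cancel₀ hk', one_mul]
  gcongr
  exact hsum N

lemma of_approx {b : ℕ → ℕ → ℝ} {δ : ℕ → ℝ} (hb : ∀ k, CesaroNull (b k))
    (hδ : Tendsto δ atTop (𝓝 0)) (hle : ∀ k n, |a n| ≤ |b k n| + δ k) : CesaroNull a := by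
  rw [CesaroNull, Metric.tendsto_atTop]
  intro ε hε
  obtain ⟨k, hk⟩ := (hδ.eventually (gt_mem_nhds (half_pos hε))).exists
  obtain ⟨N₀, hN₀⟩ := Metric.tendsto_atTop.1 (hb k) (ε / 2) (half_pos hε)
  refine ⟨max N₀ 1, fun N hN => ?_⟩
  have hN₁ : (N : ℝ) ≠ 0 := by
    have : 1 ≤ N := (le_max_right _ _).trans hN
    positivity
  have hbN := hN₀ N ((le_max_left _ _).trans hN)
  rw [Real.dist_eq, sub_zero, abs_of_nonneg (by positivity)] at hbN ⊢
  calc (N : ℝ)⁻¹ * ∑ n ∈ Icc 1 N, |a n|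
      ≤ (N : ℝ)⁻¹ * ∑ n ∈ Icc 1 N, (|b k n| + δ k) := by gcongr with n; exact hle k n
    _ = (N : ℝ)⁻¹ * ∑ n ∈ Icc 1 N, |b k n| + δ k := by
      rw [sum_add_distrib, sum_const, Nat.card_Icc, Nat.add_sub_cancel, nsmul_eq_mul, mul_add,
        inv_mul_cancel_left₀ hN₁]
    _ < ε := by linarith

end CesaroNull

theorem MeasurableSpace.induction_on_inter_of_approx {Y : Type*} [m : MeasurableSpace Y]
    (ν : Measure Y) [IsFiniteMeasure ν] {P : Set Y → Prop} {C : Set (Set Y)}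
    (h_eq : m = generateFrom C) (h_inter : IsPiSystem C) (empty : P ∅)
    (basic : ∀ s ∈ C, P s) (compl : ∀ s, MeasurableSet s → P s → P sᶜ)
    (union : ∀ s u, MeasurableSet s → MeasurableSet u → Disjoint s u → P s → P u → P (s ∪ u))
    (limit : ∀ s (u : ℕ → Set Y), MeasurableSet s → (∀ k, MeasurableSet (u k)) →
      (∀ k, P (u k)) → Tendsto (fun k => ν.real (s ∆ u k)) atTop (𝓝 0) → P s) :
    ∀ s, MeasurableSet s → P s := by
  refine induction_on_inter (C := fun s _ => P s) h_eq h_inter empty basic compl ?_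
  intro f hdisj hf hPf
  have hacc : ∀ k, MeasurableSet (Set.accumulate f k) :=
    fun k => .biUnion (Set.to_countable _) fun i _ => hf i
  have hPacc : ∀ k, P (Set.accumulate f k) := by
    intro k
    induction k with
    | zero => simpa using hPf 0
    | succ k ih =>
      rw [Set.accumulate_succ]
      exact union _ _ (hacc k) (hf _) (Set.disjoint_accumulate hdisj k.lt_succ_self) ih (hPf _)
  refine limit _ _ (.iUnion hf) hacc hPacc ?_
  have hsub : ∀ k, Set.accumulate f k ⊆ ⋃ i, f i := Set.accumulate_subset_iUnion
  simp_rw [symmDiff_of_ge (hsub _), measureReal_sdiff (μ := ν) (hsub _) (hacc _)]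
  have := (ENNReal.tendsto_toReal (measure_ne_top ν _)).comp
    (tendsto_measure_iUnion_accumulate (μ := ν) (f := f))
  simpa [measureReal_def] using this.const_sub (ν.real (⋃ i, f i))

section MixingDefect

variable {Y : Type*} [MeasurableSpace Y] {ν : Measure Y} {S : Y → Y} {A A₁ A₂ B B₁ B₂ : Set Y}

def mixingDefect (ν : Measure Y) (S : Y → Y) (A B : Set Y) (n : ℕ) : ℝ :=
  ν.real (A ∩ S^[n] ⁻¹' B) - ν.real A * ν.real B

lemma isWeakMixing_iff_cesaroNull_mixingDefect : IsWeakMixing ν S ↔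
    ∀ A B, MeasurableSet A → MeasurableSet B → CesaroNull (mixingDefect ν S A B) :=
  Iff.rfl

@[simp]
lemma mixingDefect_empty_left : mixingDefect ν S ∅ B = 0 := by
  ext; simp [mixingDefect]

@[simp]
lemma mixingDefect_empty_right : mixingDefect ν S A ∅ = 0 := by
  ext; simp [mixingDefect]

section Finite

variable [IsFiniteMeasure ν]

lemma mixingDefect_union_left (hS : Measurable S) (hA₂ : MeasurableSet A₂)
    (hB : MeasurableSet B) (hd : Disjoint A₁ A₂) :
    mixingDefect ν S (A₁ ∪ A₂) B = mixingDefect ν S A₁ B + mixingDefect ν S A₂ B := by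
  ext n
  have hunion : ν.real ((A₁ ∪ A₂) ∩ S^[n] ⁻¹' B) =
      ν.real (A₁ ∩ S^[n] ⁻¹' B) + ν.real (A₂ ∩ S^[n] ⁻¹' B) := by
    rw [Set.union_inter_distrib_right]
    exact measureReal_union (hd.mono Set.inter_subset_left Set.inter_subset_left)
      (hA₂.inter (hS.iterate n hB))
  simp only [mixingDefect, Pi.add_apply, hunion, measureReal_union (μ := ν) hd hA₂]
  ring

lemma mixingDefect_union_right (hS : Measurable S) (hA : MeasurableSet A)
    (hB₂ : MeasurableSet B₂) (hd : Disjoint B₁ B₂) :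
    mixingDefect ν S A (B₁ ∪ B₂) = mixingDefect ν S A B₁ + mixingDefect ν S A B₂ := by
  ext n
  have hunion : ν.real (A ∩ S^[n] ⁻¹' (B₁ ∪ B₂)) =
      ν.real (A ∩ S^[n] ⁻¹' B₁) + ν.real (A ∩ S^[n] ⁻¹' B₂) := by
    rw [Set.preimage_union, Set.inter_union_distrib_left]
    exact measureReal_union ((hd.preimage _).mono Set.inter_subset_right Set.inter_subset_right)
      (hA.inter (hS.iterate n hB₂))
  simp only [mixingDefect, Pi.add_apply, hunion, measureReal_union (μ := ν) hd hB₂]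
  ring

end Finite

variable [IsProbabilityMeasure ν]

lemma mixingDefect_compl_left (hS : MeasurePreserving S ν ν) (hA : MeasurableSet A)
    (hB : MeasurableSet B) : mixingDefect ν S Aᶜ B = -mixingDefect ν S A B := by
  ext n
  have hsplit := measureReal_inter_add_sdiff (μ := ν) (s := S^[n] ⁻¹' B) hA
  rw [(hS.iterate n).measureReal_preimage hB.nullMeasurableSet, Set.sdiff_eq] at hsplit
  simp only [mixingDefect, Pi.neg_apply, measureReal_compl hA, probReal_univ,
    Set.inter_comm Aᶜ, Set.inter_comm A]
  linarith

lemma mixingDefect_compl_right (hS : Measurable S) (hB : MeasurableSet B) :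
    mixingDefect ν S A Bᶜ = -mixingDefect ν S A B := by
  ext n
  have hsplit := measureReal_inter_add_sdiff (μ := ν) (s := A) (hS.iterate n hB)
  rw [Set.sdiff_eq] at hsplit
  simp only [mixingDefect, Pi.neg_apply, measureReal_compl hB, probReal_univ, Set.preimage_compl]
  linarith

lemma abs_mixingDefect_sub_le (hS : MeasurePreserving S ν ν) {A' B' : Set Y}
    (hA : MeasurableSet A) (hA' : MeasurableSet A') (hB : MeasurableSet B)
    (hB' : MeasurableSet B') (n : ℕ) :
    |mixingDefect ν S A B n - mixingDefect ν S A' B' n| ≤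
      2 * (ν.real (A ∆ A') + ν.real (B ∆ B')) := by
  have hSn := hS.iterate n
  have hAA' := abs_measureReal_sub_le_measureReal_symmDiff (μ := ν)
    hA.nullMeasurableSet hA'.nullMeasurableSet
  have hBB' := abs_measureReal_sub_le_measureReal_symmDiff (μ := ν)
    hB.nullMeasurableSet hB'.nullMeasurableSet
  have hinter : |ν.real (A ∩ S^[n] ⁻¹' B) - ν.real (A' ∩ S^[n] ⁻¹' B')| ≤
      ν.real (A ∆ A') + ν.real (B ∆ B') :=
    calc _ ≤ ν.real ((A ∩ S^[n] ⁻¹' B) ∆ (A' ∩ S^[n] ⁻¹' B')) :=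
          abs_measureReal_sub_le_measureReal_symmDiff
            (hA.inter (hSn.measurable hB)).nullMeasurableSet
            (hA'.inter (hSn.measurable hB')).nullMeasurableSet
      _ ≤ ν.real (A ∆ A' ∪ S^[n] ⁻¹' (B ∆ B')) := by
          refine measureReal_mono (fun x hx => ?_)
          simp only [Set.mem_symmDiff, Set.mem_inter_iff, Set.mem_union, Set.mem_preimage] at hx ⊢
          tauto
      _ ≤ ν.real (A ∆ A') + ν.real (B ∆ B') := by
          rw [← hSn.measureReal_preimage (hB.symmDiff hB').nullMeasurableSet]
          exact measureReal_union_le _ _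
  have hprod : |ν.real A * ν.real B - ν.real A' * ν.real B'| ≤
      ν.real (A ∆ A') + ν.real (B ∆ B') := by
    have h0 : 0 ≤ ν.real B ∧ ν.real A' ≤ 1 ∧ 0 ≤ ν.real A' ∧ ν.real B ≤ 1 :=
      ⟨measureReal_nonneg, measureReal_le_one, measureReal_nonneg, measureReal_le_one⟩
    rw [abs_le] at hAA' hBB' ⊢
    constructor <;> nlinarith
  rw [abs_le] at hinter hprod
  rw [mixingDefect, mixingDefect, abs_le]
  constructor <;> linarith

lemma cesaroNull_mixingDefect_of_tendsto (hS : MeasurePreserving S ν ν)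
    {A' B' : ℕ → Set Y} (hA : MeasurableSet A) (hA' : ∀ k, MeasurableSet (A' k))
    (hB : MeasurableSet B) (hB' : ∀ k, MeasurableSet (B' k))
    (h : ∀ k, CesaroNull (mixingDefect ν S (A' k) (B' k)))
    (hAlim : Tendsto (fun k => ν.real (A ∆ A' k)) atTop (𝓝 0))
    (hBlim : Tendsto (fun k => ν.real (B ∆ B' k)) atTop (𝓝 0)) :
    CesaroNull (mixingDefect ν S A B) := by
  refine CesaroNull.of_approx h (by simpa using (hAlim.add hBlim).const_mul 2) fun k n => ?_
  have := abs_mixingDefect_sub_le hS hA (hA' k) hB (hB' k) n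
  linarith [abs_sub_abs_le_abs_sub (mixingDefect ν S A B n) (mixingDefect ν S (A' k) (B' k) n)]

end MixingDefect

section PiSystem

variable {Y : Type*} [m : MeasurableSpace Y] {ν : Measure Y} [IsProbabilityMeasure ν]
  {S : Y → Y} {C : Set (Set Y)} {A B : Set Y}

lemma cesaroNull_mixingDefect_of_isPiSystem_right (hS : MeasurePreserving S ν ν)
    (h_eq : m = generateFrom C) (h_inter : IsPiSystem C) (hA : MeasurableSet A)
    (hAC : ∀ B ∈ C, CesaroNull (mixingDefect ν S A B)) (hB : MeasurableSet B) :
    CesaroNull (mixingDefect ν S A B) := by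
  refine MeasurableSpace.induction_on_inter_of_approx ν h_eq h_inter (by simpa using .zero) hAC
    ?_ ?_ ?_ B hB
  · intro B hB hAB
    simpa [mixingDefect_compl_right hS.measurable hB] using hAB.neg
  · intro B₁ B₂ _ hB₂ hd h₁ h₂
    simpa [mixingDefect_union_right hS.measurable hA hB₂ hd] using h₁.add h₂
  · intro B u hB hu hAu hlim
    exact cesaroNull_mixingDefect_of_tendsto hS hA (fun _ => hA) hB hu hAu (by simp) hlim

lemma cesaroNull_mixingDefect_of_isPiSystem_left (hS : MeasurePreserving S ν ν)
    (h_eq : m = generateFrom C) (h_inter : IsPiSystem C) (hB : MeasurableSet B)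
    (hBC : ∀ A ∈ C, CesaroNull (mixingDefect ν S A B)) (hA : MeasurableSet A) :
    CesaroNull (mixingDefect ν S A B) := by
  refine MeasurableSpace.induction_on_inter_of_approx ν h_eq h_inter (by simpa using .zero) hBC
    ?_ ?_ ?_ A hA
  · intro A hA hAB
    simpa [mixingDefect_compl_left hS hA hB] using hAB.neg
  · intro A₁ A₂ _ hA₂ hd h₁ h₂
    simpa [mixingDefect_union_left hS.measurable hA₂ hB hd] using h₁.add h₂
  · intro A u hA hu huB hlim
    exact cesaroNull_mixingDefect_of_tendsto hS hA hu hB (fun _ => hB) huB hlim (by simp)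

theorem IsWeakMixing.of_isPiSystem (hS : MeasurePreserving S ν ν) (h_eq : m = generateFrom C)
    (h_inter : IsPiSystem C) (hC : ∀ A ∈ C, ∀ B ∈ C, CesaroNull (mixingDefect ν S A B)) :
    IsWeakMixing ν S := by
  have hCmeas : ∀ s ∈ C, MeasurableSet s := fun s hs => h_eq ▸ measurableSet_generateFrom hs
  refine isWeakMixing_iff_cesaroNull_mixingDefect.2 fun A B hA hB => ?_
  refine cesaroNull_mixingDefect_of_isPiSystem_left hS h_eq h_inter hB (fun A' hA' => ?_) hA
  exact cesaroNull_mixingDefect_of_isPiSystem_right hS h_eq h_inter (hCmeas A' hA') (hC A' hA') hB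

end PiSystem

lemma IsWeakMixing.iterate {X : Type*} [MeasurableSpace X] {μ : Measure X} {T : X → X}
    (hwm : IsWeakMixing μ T) {k : ℕ} (hk : 0 < k) : IsWeakMixing μ T^[k] := by
  rw [isWeakMixing_iff_cesaroNull_mixingDefect] at hwm ⊢
  intro A B hA hB
  have hdefect : mixingDefect μ T^[k] A B = fun n => mixingDefect μ T A B (k * n) := by
    ext n
    rw [mixingDefect, mixingDefect, Function.iterate_mul]
  rw [hdefect]
  exact (hwm A B hA hB).comp_mul hk

lemma iterate_pi_map {ι : Type*} {X : ι → Type*} (T : ∀ i, X i → X i) (n : ℕ) :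
    (fun (x : ∀ i, X i) i => T i (x i))^[n] = fun x i => (T i)^[n] (x i) := by
  induction n with
  | zero => rfl
  | succ n ih => simp only [Function.iterate_succ', ih]; rfl

section Pi

variable {ι : Type*} [Fintype ι] {X : ι → Type*} [∀ i, MeasurableSpace (X i)]
  {μ : ∀ i, Measure (X i)} [∀ i, IsProbabilityMeasure (μ i)] {T : ∀ i, X i → X i}

lemma abs_mixingDefect_pi_le (A B : ∀ i, Set (X i)) (n : ℕ) :
    |mixingDefect (Measure.pi μ) (fun x i => T i (x i)) (Set.univ.pi A) (Set.univ.pi B) n| ≤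
      ∑ i, |mixingDefect (μ i) (T i) (A i) (B i) n| := by
  have hbox : Set.univ.pi A ∩ (fun (x : ∀ i, X i) i => T i (x i))^[n] ⁻¹' Set.univ.pi B =
      Set.univ.pi fun i => A i ∩ (T i)^[n] ⁻¹' B i := by
    ext x
    simp [iterate_pi_map T, forall_and]
  simp only [mixingDefect, hbox, measureReal_def, Measure.pi_pi, ENNReal.toReal_prod,
    ← prod_mul_distrib]
  have hle : ∀ i s, |(μ i).real s| ≤ 1 := fun i s =>
    (abs_of_nonneg measureReal_nonneg).trans_le measureReal_le_one
  refine abs_prod_sub_prod_le_sum_abs_sub _ (fun i _ => hle i _) fun i _ => ?_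
  rw [abs_mul]
  exact mul_le_one₀ (hle i _) (abs_nonneg _) (hle i _)

theorem IsWeakMixing.pi (hT : ∀ i, MeasurePreserving (T i) (μ i) (μ i))
    (hwm : ∀ i, IsWeakMixing (μ i) (T i)) :
    IsWeakMixing (Measure.pi μ) (fun x i => T i (x i)) := by
  refine .of_isPiSystem (measurePreserving_pi μ μ hT) generateFrom_pi.symm isPiSystem_pi ?_
  rintro _ ⟨A, hA, rfl⟩ _ ⟨B, hB, rfl⟩
  have hcoord : ∀ i, CesaroNull (mixingDefect (μ i) (T i) (A i) (B i)) := fun i =>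
    (isWeakMixing_iff_cesaroNull_mixingDefect.1 (hwm i)) _ _ (hA i trivial) (hB i trivial)
  refine CesaroNull.mono (b := fun n => ∑ i, |mixingDefect (μ i) (T i) (A i) (B i) n|)
    (by simpa [← Finset.sum_fn] using CesaroNull.sum fun i _ => (hcoord i).abs)
    fun n => (abs_mixingDefect_pi_le A B n).trans (le_abs_self _)

end Pi

theorem stmt7_general {X : Type*} [MeasurableSpace X] (μ : Measure X)
    [IsProbabilityMeasure μ] (T : X → X) (hT : MeasurePreserving T μ μ)
    (hwm : IsWeakMixing μ T) (t : ℕ) :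
    IsWeakMixing (Measure.pi fun _ : Fin t => μ)
      (fun x : Fin t → X => fun i => T^[(i : ℕ) + 1] (x i)) :=
  IsWeakMixing.pi (fun _ => hT.iterate _) fun _ => hwm.iterate (Nat.succ_pos _)

/-- If `T` is weakly mixing, then `T × T² × ⋯ × T^t` is weakly mixing on the
product space. -/
theorem stmt7 {X : Type*} [MeasurableSpace X] (μ : Measure X)
    [IsProbabilityMeasure μ] (T : X → X) (hT : MeasurePreserving T μ μ)
    (hwm : IsWeakMixing μ T) (t : ℕ) (ht : 1 ≤ t) :
    IsWeakMixing (Measure.pi fun _ : Fin t => μ)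
      (fun x : Fin t → X => fun i => T^[(i : ℕ) + 1] (x i)) :=
  stmt7_general μ T hT hwm t
end

section
/- (Cantor van der Waerden, minimal case) Let (X, T) be a minimal topological dynamical system on a compact metric space with T continuous, let U ⊆ X be a nonempty open set, and let n ≥ 1. Let K be an integer Cantor set C_{b,D} with 0 ∈ D. Then there exist y ∈ X and r ∈ K \ {0} such that y, T^r y, T^{2r} y, ..., T^{(n−1)r} y all lie in U. -/
open Filter Finset

/-!
Color `m ∈ ℕ` by some `k` in a finite set `t` with `T^(k + m) x₀ ∈ U`; such a `t` exists because
minimality makes the sets `T^{-k} U` an open cover of the compact space `X`. Embed the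
Hales–Jewett cube `ι → Fin n` into `ℕ` by `x ↦ ∑ᵢ d bⁱ xᵢ` for a nonzero digit `d ∈ D`. A
monochromatic combinatorial line is then a monochromatic progression `a + i R` whose step
`R = ∑_{i ∈ S} d bⁱ` has only the digits `0` and `d`, hence lies in the Cantor set.
-/

section CantorSet

variable {b : ℕ} {D : Finset ℕ}

lemma mem_intCantorSet_of_mem_of_lt {d : ℕ} (hd : d ∈ D) (hdb : d < b) : d ∈ intCantorSet b D := by
  rcases eq_or_ne d 0 with rfl | hd0
  · simp [intCantorSet]
  · intro u hu
    rw [Nat.digits_of_lt b d hd0 hdb, List.mem_singleton] at hu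
    exact hu ▸ hd

lemma add_base_pow_mul_mem_intCantorSet (hb : 1 < b) (h0 : 0 ∈ D) {m e k : ℕ}
    (hm : m ∈ intCantorSet b D) (he : e ∈ intCantorSet b D) (hmk : m < b ^ k) :
    m + b ^ k * e ∈ intCantorSet b D := by
  rcases Nat.eq_zero_or_pos e with rfl | he0
  · simpa using hm
  obtain ⟨j, rfl⟩ := Nat.exists_eq_add_of_le ((Nat.digits_length_le_iff hb m).2 hmk)
  intro u hu
  rw [← Nat.digits_append_zeroes_append_digits hb he0] at hu
  simp only [List.mem_append, List.mem_replicate] at hu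
  rcases hu with (hu | ⟨-, rfl⟩) | hu
  · exact hm u hu
  · exact h0
  · exact he u hu

lemma sum_mul_pow_lt_pow {d : ℕ} (hdb : d < b) {S : Finset ℕ} {a : ℕ} (hS : ∀ k ∈ S, k < a) :
    ∑ k ∈ S, d * b ^ k < b ^ a := by
  have hb : 1 ≤ b := by omega
  calc ∑ k ∈ S, d * b ^ k = d * ∑ k ∈ S, b ^ k := (mul_sum _ _ _).symm
    _ ≤ (b - 1) * ∑ k ∈ range a, b ^ k :=
      Nat.mul_le_mul (by omega) (sum_le_sum_of_subset fun k hk => mem_range.2 (hS k hk))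
    _ = b ^ a - 1 := by rw [mul_comm, geom_sum_mul_of_one_le hb]
    _ < b ^ a := Nat.sub_lt (by positivity) one_pos

lemma sum_mul_pow_mem_intCantorSet (hb : 1 < b) (h0 : 0 ∈ D) {d : ℕ} (hd : d ∈ D)
    (hdb : d < b) (S : Finset ℕ) : ∑ k ∈ S, d * b ^ k ∈ intCantorSet b D := by
  induction S using Finset.induction_on_max with
  | empty => simp [intCantorSet]
  | insert a S ha ih =>
    rw [sum_insert fun h => lt_irrefl a (ha a h), add_comm, mul_comm d]
    exact add_base_pow_mul_mem_intCantorSet hb h0 ih (mem_intCantorSet_of_mem_of_lt hd hdb)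
      (sum_mul_pow_lt_pow hdb ha)

end CantorSet

namespace Combinatorics.Line

lemma sum_mul_apply {α ι : Type*} [Fintype ι] (l : Line α ι) (v : ι → ℕ) (f : α → ℕ) (x : α) :
    ∑ i, v i * f (l x i) =
      ∑ i, v i * (l.idxFun i).elim 0 f + f x * ∑ i with l.idxFun i = none, v i := by
  rw [sum_filter, mul_sum, ← sum_add_distrib]
  refine sum_congr rfl fun i _ => ?_
  cases h : l.idxFun i <;> simp [h, mul_comm]

end Combinatorics.Line

open Combinatorics in
theorem exists_mono_add_mul_sum {κ : Type*} [Finite κ] (C : ℕ → κ) (w : ℕ → ℕ) (n : ℕ) :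
    ∃ (c : κ) (a : ℕ) (S : Finset ℕ), S.Nonempty ∧ ∀ i < n, C (a + i * ∑ k ∈ S, w k) = c := by
  obtain ⟨ι, _, hι⟩ := Line.exists_mono_in_high_dimension (Fin n) κ
  let e : ι ↪ ℕ := (Fintype.equivFin ι).toEmbedding.trans Fin.valEmbedding
  obtain ⟨l, c, hc⟩ := hι fun x => C (∑ i, w (e i) * (x i : ℕ))
  obtain ⟨i₀, hi₀⟩ := l.proper
  refine ⟨c, ∑ i, w (e i) * (l.idxFun i).elim 0 Fin.val, (univ.filter fun i => l.idxFun i = none).map e,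
    ⟨e i₀, mem_map_of_mem e (by simp [hi₀])⟩, fun i hi => ?_⟩
  rw [sum_map]
  simpa only [Line.sum_mul_apply] using hc ⟨i, hi⟩

section MinimalSystem

variable {X : Type*} [TopologicalSpace X] {T : X → X} {U : Set X}

lemma iUnion_preimage_iterate_eq_univ (hT : Continuous T)
    (hmin : ∀ F : Set X, IsClosed F → T '' F ⊆ F → F = ∅ ∨ F = Set.univ)
    (hU : IsOpen U) (hUne : U.Nonempty) : ⋃ k, T^[k] ⁻¹' U = Set.univ := by
  have hopen : IsOpen (⋃ k, T^[k] ⁻¹' U) :=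
    isOpen_iUnion fun k => (hT.iterate k).isOpen_preimage U hU
  have hinv : T '' (⋃ k, T^[k] ⁻¹' U)ᶜ ⊆ (⋃ k, T^[k] ⁻¹' U)ᶜ := by
    rintro _ ⟨x, hx, rfl⟩ hTx
    obtain ⟨k, hk⟩ := Set.mem_iUnion.1 hTx
    exact hx (Set.mem_iUnion.2 ⟨k + 1, by simpa [Function.iterate_succ_apply] using hk⟩)
  rcases hmin _ hopen.isClosed_compl hinv with h | h
  · exact Set.compl_empty_iff.1 h
  · obtain ⟨x, hx⟩ := hUne
    exact absurd (Set.mem_iUnion.2 ⟨0, hx⟩) (h ▸ Set.mem_univ x)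

lemma exists_finset_forall_exists_iterate_mem [CompactSpace X] (hT : Continuous T)
    (hmin : ∀ F : Set X, IsClosed F → T '' F ⊆ F → F = ∅ ∨ F = Set.univ)
    (hU : IsOpen U) (hUne : U.Nonempty) : ∃ t : Finset ℕ, ∀ x, ∃ k ∈ t, T^[k] x ∈ U := by
  obtain ⟨t, ht⟩ := isCompact_univ.elim_finite_subcover (fun k => T^[k] ⁻¹' U)
    (fun k => (hT.iterate k).isOpen_preimage U hU)
    (iUnion_preimage_iterate_eq_univ hT hmin hU hUne).ge
  exact ⟨t, fun x => by simpa using ht (Set.mem_univ x)⟩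

end MinimalSystem

theorem stmt12_general {X : Type*} [MetricSpace X] [CompactSpace X]
    (T : X → X) (hT : Continuous T)
    (hmin : ∀ F : Set X, IsClosed F → T '' F ⊆ F → F = ∅ ∨ F = Set.univ)
    (b : ℕ) (D : Finset ℕ) (hb : 3 ≤ b) (hDb : ∀ d ∈ D, d < b)
    (hc2 : 2 ≤ D.card) (h0 : 0 ∈ D)
    (U : Set X) (hU : IsOpen U) (hUne : U.Nonempty) (n : ℕ) :
    ∃ (y : X) (r : ℕ), r ∈ intCantorSet b D ∧ r ≠ 0 ∧
      ∀ i < n, T^[i * r] y ∈ U := by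
  obtain ⟨t, ht⟩ := exists_finset_forall_exists_iterate_mem hT hmin hU hUne
  let x₀ := hUne.some
  choose k hkt hk using fun m => ht (T^[m] x₀)
  obtain ⟨d, hdD, hd0⟩ := D.exists_mem_ne (by omega) 0
  obtain ⟨c, a, S, hS, hc⟩ :=
    exists_mono_add_mul_sum (fun m => (⟨k m, hkt m⟩ : t)) (fun j => d * b ^ j) n
  refine ⟨T^[c + a] x₀, ∑ j ∈ S, d * b ^ j,
    sum_mul_pow_mem_intCantorSet (by omega) h0 hdD (hDb d hdD) S,
    (sum_pos (fun j _ => by positivity) hS).ne', fun i hi => ?_⟩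
  have hmem := hk (a + i * ∑ j ∈ S, d * b ^ j)
  have hkc : k (a + i * ∑ j ∈ S, d * b ^ j) = c := congrArg Subtype.val (hc i hi)
  rw [hkc, ← Function.iterate_add_apply] at hmem
  rwa [← Function.iterate_add_apply, add_comm, add_assoc]

/-- Cantor van der Waerden theorem, minimal case: in a minimal topological
dynamical system, every nonempty open set contains an arithmetic progression
`y, T^r y, …, T^{(n-1)r} y` with step `r` a nonzero element of the Cantor
set. -/
theorem stmt12 {X : Type*} [MetricSpace X] [CompactSpace X]
    (T : X → X) (hT : Continuous T)
    (hmin : ∀ F : Set X, IsClosed F → T '' F ⊆ F → F = ∅ ∨ F = Set.univ)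
    (b : ℕ) (D : Finset ℕ) (hb : 3 ≤ b) (hDb : ∀ d ∈ D, d < b)
    (hc2 : 2 ≤ D.card) (hcb : D.card < b) (h0 : 0 ∈ D)
    (U : Set X) (hU : IsOpen U) (hUne : U.Nonempty) (n : ℕ) (hn : 1 ≤ n) :
    ∃ (y : X) (r : ℕ), r ∈ intCantorSet b D ∧ r ≠ 0 ∧
      ∀ i < n, T^[i * r] y ∈ U :=
  stmt12_general T hT hmin b D hb hDb hc2 h0 U hU hUne n
end

section
/- (Cantor van der Waerden) Let (X, T) be a topological dynamical system on a compact metric space and (U_α)_{α∈A} an open cover of X. Let K = C_{b,D} be an integer Cantor set with 0 ∈ D. Then for every n ≥ 1 there exist α ∈ A, x ∈ X, and r ∈ K \ {0} such that x, T^r x, ..., T^{(n−1)r} x ∈ U_α. -/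
/-!
Cover `X` by finitely many of the `U α` and colour `m ∈ ℕ` by a member containing `T^[m] x₀`.
Read a word `v ∈ (Fin n)^N` as the number `∑ i, v i * d * b ^ i`, where `d ∈ D` is a nonzero
digit. By the Hales–Jewett theorem some combinatorial line is monochromatic, and its image is the
progression `a + i * r` with `r = d * ∑ b ^ i` over the moving coordinates: all digits of `r` are
`0` or `d`, so `r` lies in the Cantor set.
-/

open Filter Finset

section IntCantorSet

variable {b : ℕ} {D : Finset ℕ}

theorem zero_mem_intCantorSet : 0 ∈ intCantorSet b D := by
  simp [intCantorSet]

theorem add_mul_mem_intCantorSet (hb : 1 < b) {a m : ℕ} (ha : a ∈ D) (hab : a < b)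
    (hm : m ∈ intCantorSet b D) : a + b * m ∈ intCantorSet b D := by
  rcases eq_or_ne a 0 with rfl | ha0 <;> rcases eq_or_ne m 0 with rfl | hm0
  · simpa using zero_mem_intCantorSet
  all_goals
    intro d hd
    rw [Nat.digits_add b hb _ _ hab (by tauto), List.mem_cons] at hd
    exact hd.elim (· ▸ ha) (hm d)

theorem sum_range_mul_pow_mem_intCantorSet (hb : 1 < b) {f : ℕ → ℕ} (hfD : ∀ k, f k ∈ D)
    (hfb : ∀ k, f k < b) (N : ℕ) : ∑ k ∈ range N, f k * b ^ k ∈ intCantorSet b D := by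
  induction N generalizing f with
  | zero => exact zero_mem_intCantorSet
  | succ N ih =>
    have hshift : ∑ k ∈ range N, f (k + 1) * b ^ (k + 1) =
        b * ∑ k ∈ range N, f (k + 1) * b ^ k := by
      rw [mul_sum]; exact sum_congr rfl fun k _ => by ring
    rw [sum_range_succ', hshift, pow_zero, mul_one, add_comm]
    exact add_mul_mem_intCantorSet hb (hfD 0) (hfb 0) (ih (fun k => hfD _) fun k => hfb _)

theorem mul_sum_pow_mem_intCantorSet (hb : 1 < b) {d : ℕ} (hd : d ∈ D) (hdb : d < b)
    (h0 : 0 ∈ D) (s : Finset ℕ) : d * ∑ k ∈ s, b ^ k ∈ intCantorSet b D := by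
  classical
  obtain ⟨N, hsN⟩ := s.exists_nat_subset_range
  have hdigits :
      d * ∑ k ∈ s, b ^ k = ∑ k ∈ range N, (if k ∈ s then d else 0) * b ^ k := by
    simp only [ite_mul, zero_mul, sum_ite_mem, inter_eq_right.mpr hsN, mul_sum]
  rw [hdigits]
  exact sum_range_mul_pow_mem_intCantorSet hb (fun k => by split_ifs <;> assumption)
    (fun k => by split_ifs <;> omega) N

end IntCantorSet

namespace Combinatorics.Line

theorem sum_apply_mul {n : ℕ} {ι : Type*} [Fintype ι] (l : Line (Fin n) ι) (w : ι → ℕ)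
    (x : Fin n) :
    ∑ i, (l x i : ℕ) * w i =
      ∑ i, ((l.idxFun i).elim 0 (↑)) * w i + x * ∑ i with l.idxFun i = none, w i := by
  rw [sum_filter, mul_sum, ← sum_add_distrib]
  refine sum_congr rfl fun i _ => ?_
  cases h : l.idxFun i <;> simp [h]

end Combinatorics.Line

theorem exists_mono_progression_step_mem_intCantorSet {κ : Type*} [Finite κ] {b d : ℕ}
    {D : Finset ℕ} (hb : 1 < b) (hd : d ∈ D) (hdb : d < b) (hd0 : d ≠ 0) (h0 : 0 ∈ D)
    (C : ℕ → κ) (n : ℕ) :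
    ∃ a r c, r ∈ intCantorSet b D ∧ r ≠ 0 ∧ ∀ i < n, C (a + i * r) = c := by
  classical
  obtain ⟨ι, _, hHJ⟩ := Combinatorics.Line.exists_mono_in_high_dimension (Fin n) κ
  let e : ι ↪ ℕ := (Fintype.equivFin ι).toEmbedding.trans Fin.valEmbedding
  let w : ι → ℕ := fun i => d * b ^ e i
  obtain ⟨l, c, hl⟩ := hHJ fun v => C (∑ i, (v i : ℕ) * w i)
  let a := ∑ i, ((l.idxFun i).elim 0 (↑)) * w i
  let r := ∑ i with l.idxFun i = none, w i
  have hprog (x : Fin n) : C (a + x * r) = c :=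
    (congrArg C (l.sum_apply_mul w x)).symm.trans (hl x)
  have hr : r ∈ intCantorSet b D := by
    rw [show r = d * ∑ i with l.idxFun i = none, b ^ e i from (mul_sum ..).symm,
      ← sum_map _ e (b ^ ·)]
    exact mul_sum_pow_mem_intCantorSet hb hd hdb h0 _
  have hr0 : r ≠ 0 := by
    obtain ⟨i, hi⟩ := l.proper
    refine (sum_pos (fun i _ => ?_) ⟨i, by simpa using hi⟩).ne'
    exact Nat.mul_pos (Nat.pos_of_ne_zero hd0) (pow_pos (by omega) _)
  exact ⟨a, r, c, hr, hr0, fun i hi => hprog ⟨i, hi⟩⟩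

theorem stmt13_general {X : Type*} [MetricSpace X] [CompactSpace X] [Nonempty X]
    (T : X → X)
    (b : ℕ) (D : Finset ℕ) (hb : 3 ≤ b) (hDb : ∀ d ∈ D, d < b)
    (hc2 : 2 ≤ D.card) (h0 : 0 ∈ D)
    {ι : Type*} (U : ι → Set X) (hUopen : ∀ α, IsOpen (U α))
    (hcover : ⋃ α, U α = Set.univ) (n : ℕ) :
    ∃ (α : ι) (x : X) (r : ℕ), r ∈ intCantorSet b D ∧ r ≠ 0 ∧
      ∀ i < n, T^[i * r] x ∈ U α := by
  obtain ⟨d, hd, hd0⟩ := Finset.exists_mem_ne hc2 0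
  obtain ⟨t, ht⟩ := isCompact_univ.elim_finite_subcover U hUopen hcover.ge
  obtain ⟨x₀⟩ := ‹Nonempty X›
  have horbit : ∀ m, ∃ α : t, T^[m] x₀ ∈ U α := fun m => by
    simpa using ht (Set.mem_univ (T^[m] x₀))
  choose C hC using horbit
  obtain ⟨a, r, c, hr, hr0, hmono⟩ :=
    exists_mono_progression_step_mem_intCantorSet (by omega) hd (hDb d hd) hd0 h0 C n
  refine ⟨c, T^[a] x₀, r, hr, hr0, fun i hi => ?_⟩
  rw [← Function.iterate_add_apply, add_comm, ← hmono i hi]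
  exact hC _

/-- Cantor van der Waerden theorem: for any topological dynamical system and
any open cover, some member of the cover contains an arithmetic progression
`x, T^r x, …, T^{(n-1)r} x` with step `r` a nonzero element of the Cantor
set. -/
theorem stmt13 {X : Type*} [MetricSpace X] [CompactSpace X] [Nonempty X]
    (T : X → X) (hT : Continuous T)
    (b : ℕ) (D : Finset ℕ) (hb : 3 ≤ b) (hDb : ∀ d ∈ D, d < b)
    (hc2 : 2 ≤ D.card) (hcb : D.card < b) (h0 : 0 ∈ D)
    {ι : Type*} (U : ι → Set X) (hUopen : ∀ α, IsOpen (U α))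
    (hcover : ⋃ α, U α = Set.univ) (n : ℕ) (hn : 1 ≤ n) :
    ∃ (α : ι) (x : X) (r : ℕ), r ∈ intCantorSet b D ∧ r ≠ 0 ∧
      ∀ i < n, T^[i * r] x ∈ U α :=
  stmt13_general T b D hb hDb hc2 h0 U hUopen hcover n
end
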